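/- arXiv:2103.03471 — 8 statements merged into one kernel-verified Lean document; each statement's English description precedes it below -/
import Mathlib

section
/- Let p ≥ 2 and let P be a real p×(p−1) matrix with PᵀP = I (orthonormal columns) and Pᵀ1 = 0 (its columns span the orthogonal complement of the all-ones vector). Then for every p×p real symmetric matrix L with L·1 = 0, det(L + (1/p)·1 1ᵀ) = det(Pᵀ L P). -/
open Matrix BigOperators

/-- Let `p ≥ 2` and let `P` be a real `p × (p-1)` matrix with orthonormal
columns (`Pᵀ P = I`) whose columns are orthogonal to the all-ones vector (`Pᵀ 1 = 0`).
Then for every symmetric `p × p` real matrix `L` with `L · 1 = 0`,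
`det (L + (1/p) · 1 1ᵀ) = det (Pᵀ L P)`. -/
theorem det_add_ones_eq_det_conj (p : ℕ) (hp : 2 ≤ p)
    (P : Matrix (Fin p) (Fin (p - 1)) ℝ)
    (hP : Pᵀ * P = 1)
    (hP1 : Pᵀ.mulVec (fun _ => (1 : ℝ)) = 0)
    (L : Matrix (Fin p) (Fin p) ℝ) (hsym : L.IsSymm)
    (hone : L.mulVec (fun _ => (1 : ℝ)) = 0) :
    (L + (p : ℝ)⁻¹ • Matrix.of (fun _ _ : Fin p => (1 : ℝ))).det = (Pᵀ * L * P).det := by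
  have hppos : (0 : ℝ) < p := by positivity
  set c : ℝ := Real.sqrt p with hcdef
  have hc2 : c * c = p := Real.mul_self_sqrt (le_of_lt hppos)
  have hc0 : c ≠ 0 := by
    intro h; rw [h, mul_zero] at hc2; exact (ne_of_gt hppos) hc2.symm
  -- all-ones column vector as a p×1 matrix
  set o : Matrix (Fin p) (Fin 1) ℝ := Matrix.of (fun _ _ => (1 : ℝ)) with hodef
  set J : Matrix (Fin p) (Fin p) ℝ := Matrix.of (fun _ _ : Fin p => (1 : ℝ)) with hJdef
  set M : Matrix (Fin p) (Fin p) ℝ := L + (p : ℝ)⁻¹ • J with hMdef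
  have hPo : Pᵀ * o = 0 := by
    ext j k
    have := congrFun hP1 j
    simpa [Matrix.mul_apply, Matrix.mulVec, dotProduct, hodef] using this
  have hLo : L * o = 0 := by
    ext j k
    have := congrFun hone j
    simpa [Matrix.mul_apply, Matrix.mulVec, dotProduct, hodef] using this
  have hoL : oᵀ * L = 0 := by
    have h1 : (L * o)ᵀ = oᵀ * Lᵀ := Matrix.transpose_mul L o
    rw [hLo] at h1
    rw [← hsym.eq, ← h1, Matrix.transpose_zero]
  have hoo : oᵀ * o = (p : ℝ) • (1 : Matrix (Fin 1) (Fin 1) ℝ) := by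
    ext i j
    have : i = j := Subsingleton.elim i j
    subst this
    simp [Matrix.mul_apply, hodef, Matrix.one_apply]
  have hJoo : J = o * oᵀ := by
    ext i j
    simp [Matrix.mul_apply, hJdef, hodef]
  -- the extra column
  set u : Matrix (Fin p) (Fin 1) ℝ := c⁻¹ • o with hudef
  set Q : Matrix (Fin p) (Fin (p - 1) ⊕ Fin 1) ℝ := Matrix.fromCols P u with hQdef
  have hPu : Pᵀ * u = 0 := by
    rw [hudef, Matrix.mul_smul, hPo, smul_zero]
  have hcc1 : c⁻¹ * c⁻¹ * (p : ℝ) = 1 := by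
    rw [← mul_inv, hc2]; exact inv_mul_cancel₀ (ne_of_gt hppos)
  have huu : uᵀ * u = 1 := by
    rw [hudef, Matrix.transpose_smul, Matrix.smul_mul, Matrix.mul_smul, hoo,
      smul_smul, smul_smul, hcc1, one_smul]
  have huP : uᵀ * P = 0 := by
    have := congrArg Matrix.transpose hPu
    simpa using this
  have hQT : Qᵀ = Matrix.fromRows Pᵀ uᵀ := by
    rw [hQdef, Matrix.transpose_fromCols]
  have hQQ : Qᵀ * Q = 1 := by
    rw [hQT, hQdef, Matrix.fromRows_mul_fromCols, hP, hPu, huP, huu,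
      Matrix.fromBlocks_one]
  -- compute Qᵀ * M * Q
  have huL : uᵀ * L = 0 := by
    rw [hudef, Matrix.transpose_smul, Matrix.smul_mul, hoL, smul_zero]
  have hLu : L * u = 0 := by
    rw [hudef, Matrix.mul_smul, hLo, smul_zero]
  have hQLQ : Qᵀ * L * Q = Matrix.fromBlocks (Pᵀ * L * P) 0 0 0 := by
    rw [hQT, Matrix.fromRows_mul, hQdef, Matrix.fromRows_mul_fromCols]
    rw [Matrix.mul_assoc Pᵀ L u, hLu, Matrix.mul_zero, huL, Matrix.zero_mul,
      Matrix.zero_mul]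
  have hQo : Qᵀ * o = Matrix.fromRows 0 ((c⁻¹ * p) • 1) := by
    rw [hQT, Matrix.fromRows_mul, hPo, hudef, Matrix.transpose_smul,
      Matrix.smul_mul, hoo, smul_smul]
  have hQJQ : Qᵀ * J * Q = Matrix.fromBlocks 0 0 0 ((p : ℝ) • 1) := by
    have hoQ : oᵀ * Q = Matrix.fromCols 0 ((c⁻¹ * p) • 1) := by
      have := congrArg Matrix.transpose hQo
      simpa [Matrix.transpose_fromRows] using this
    have hassoc : Qᵀ * (o * oᵀ) * Q = (Qᵀ * o) * (oᵀ * Q) := by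
      simp only [Matrix.mul_assoc]
    have hcc : c⁻¹ * (p : ℝ) * (c⁻¹ * (p : ℝ)) = (p : ℝ) := by
      have h : c⁻¹ * (p : ℝ) * (c⁻¹ * (p : ℝ)) = (c⁻¹ * c⁻¹ * (p : ℝ)) * (p : ℝ) := by ring
      rw [h, hcc1, one_mul]
    have hXY : ((c⁻¹ * (p : ℝ)) • (1 : Matrix (Fin 1) (Fin 1) ℝ)) * ((c⁻¹ * (p : ℝ)) • 1)
        = (p : ℝ) • 1 := by
      rw [Matrix.smul_mul, Matrix.mul_smul, Matrix.one_mul, smul_smul, hcc]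
    rw [hJoo, hassoc, hQo, hoQ, Matrix.fromRows_mul_fromCols, hXY,
      Matrix.zero_mul, Matrix.zero_mul, Matrix.mul_zero]
  have hQMQ : Qᵀ * M * Q = Matrix.fromBlocks (Pᵀ * L * P) 0 0 1 := by
    rw [hMdef, Matrix.mul_add, Matrix.add_mul, Matrix.mul_smul, Matrix.smul_mul,
      hQLQ]
    rw [hQJQ, Matrix.fromBlocks_smul, Matrix.fromBlocks_add]
    congr 1 <;> simp [smul_smul, inv_mul_cancel₀ (ne_of_gt hppos)]
  -- reindex to a genuine square matrix
  have hpe : p - 1 + 1 = p := by omega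
  set e : (Fin (p - 1) ⊕ Fin 1) ≃ Fin p := finSumFinEquiv.trans (finCongr hpe) with hedef
  set B : Matrix (Fin p) (Fin p) ℝ := Q.submatrix id ⇑e.symm with hBdef
  have hBT : Bᵀ = Qᵀ.submatrix ⇑e.symm id := by
    rw [hBdef, Matrix.transpose_submatrix]
  have hmul1 : ∀ (X : Matrix (Fin p) (Fin p) ℝ),
      Qᵀ.submatrix ⇑e.symm id * X = (Qᵀ * X).submatrix ⇑e.symm id := by
    intro X
    have := Matrix.submatrix_mul_equiv Qᵀ X ⇑e.symm (Equiv.refl (Fin p)) id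
    simpa using this
  have hmul2 : ∀ (Y : Matrix (Fin (p - 1) ⊕ Fin 1) (Fin p) ℝ),
      Y.submatrix ⇑e.symm id * B = (Y * Q).submatrix ⇑e.symm ⇑e.symm := by
    intro Y
    rw [hBdef]
    have := Matrix.submatrix_mul_equiv Y Q ⇑e.symm (Equiv.refl (Fin p)) ⇑e.symm
    simpa using this
  have hBB : Bᵀ * B = 1 := by
    rw [hBT, hBdef]
    have := Matrix.submatrix_mul_equiv Qᵀ Q ⇑e.symm (Equiv.refl (Fin p)) ⇑e.symm
    simp only [Equiv.coe_refl] at this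
    rw [this, hQQ, Matrix.submatrix_one_equiv]
  have hdetB : B.det * B.det = 1 := by
    have h := congrArg Matrix.det hBB
    rwa [Matrix.det_mul, Matrix.det_transpose, Matrix.det_one] at h
  have hBMB : Bᵀ * M * B = (Matrix.fromBlocks (Pᵀ * L * P) 0 0 1).submatrix ⇑e.symm ⇑e.symm := by
    rw [hBT, hmul1 M, hmul2 (Qᵀ * M), Matrix.mul_assoc, ← Matrix.mul_assoc, hQMQ]
  have hdet1 : (Bᵀ * M * B).det = M.det := by
    rw [Matrix.det_mul, Matrix.det_mul, Matrix.det_transpose]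
    calc B.det * M.det * B.det = M.det * (B.det * B.det) := by ring
      _ = M.det := by rw [hdetB, mul_one]
  have hdet2 : (Bᵀ * M * B).det = (Pᵀ * L * P).det := by
    rw [hBMB, Matrix.det_submatrix_equiv_self, Matrix.det_fromBlocks_zero₂₁,
      Matrix.det_one, mul_one]
  rw [← hMdef] at *
  rw [← hdet1, hdet2]
end

section
/- Let p ≥ 2 and let L be a p×p real symmetric positive semidefinite matrix whose kernel is exactly the span of the all-ones vector 1 (equivalently, L·1 = 0 and rank(L) = p − 1). Then the matrix L + (1/p)·1 1ᵀ is invertible and (L + (1/p)·1 1ᵀ)⁻¹ = L† + (1/p)·1 1ᵀ, where L† is the Moore–Penrose pseudoinverse of L. -/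
open Matrix BigOperators

/-- Let `p ≥ 2` and let `L` be a `p × p` real symmetric positive semidefinite
matrix whose kernel is exactly the span of the all-ones vector.  Let `Ldag` be the
Moore–Penrose pseudoinverse of `L`, characterized by the four Penrose conditions.
Then `L + (1/p) · 1 1ᵀ` is invertible and its inverse is `L† + (1/p) · 1 1ᵀ`. -/
theorem inv_add_ones_eq_pinv_add_ones (p : ℕ) (hp : 2 ≤ p)
    (L Ldag : Matrix (Fin p) (Fin p) ℝ) (hL : L.PosSemidef)
    (hker : ∀ x : Fin p → ℝ, L.mulVec x = 0 ↔ ∃ c : ℝ, x = fun _ => c)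
    (hpen1 : L * Ldag * L = L) (hpen2 : Ldag * L * Ldag = Ldag)
    (hpen3 : (L * Ldag)ᵀ = L * Ldag) (hpen4 : (Ldag * L)ᵀ = Ldag * L) :
    IsUnit (L + (p : ℝ)⁻¹ • Matrix.of (fun _ _ : Fin p => (1 : ℝ))) ∧
      (L + (p : ℝ)⁻¹ • Matrix.of (fun _ _ : Fin p => (1 : ℝ)))⁻¹
        = Ldag + (p : ℝ)⁻¹ • Matrix.of (fun _ _ : Fin p => (1 : ℝ)) := by
  haveI : NeZero p := ⟨by omega⟩
  set J : Matrix (Fin p) (Fin p) ℝ := Matrix.of (fun _ _ : Fin p => (1 : ℝ)) with hJ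
  have hpR : (p : ℝ) ≠ 0 := by positivity
  have hLt : Lᵀ = L := by
    have := hL.1
    rw [Matrix.IsHermitian] at this
    simpa using this
  -- L * J = 0
  have hL1 : L.mulVec (fun _ => (1:ℝ)) = 0 := (hker _).2 ⟨1, rfl⟩
  have hLJ : L * J = 0 := by
    ext i j
    have := congrFun hL1 i
    simpa [Matrix.mul_apply, Matrix.mulVec, dotProduct, hJ] using this
  have hJL : J * L = 0 := by
    have : (L * J)ᵀ = 0 := by rw [hLJ]; simp
    rw [Matrix.transpose_mul, hLt] at this
    have hJt : Jᵀ = J := by ext i j; simp [hJ]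
    rwa [hJt] at this
  -- Ldag * J = 0
  have hLdagJ : Ldag * J = 0 := by
    have h1 : Ldag = Ldag * Ldagᵀ * L := by
      rw [mul_assoc, ← hLt, ← Matrix.transpose_mul, hpen3, ← mul_assoc]
      exact hpen2.symm
    calc Ldag * J = Ldag * Ldagᵀ * (L * J) := by rw [← mul_assoc, ← h1]
    _ = 0 := by rw [hLJ, mul_zero]
  -- the projection Q = 1 - Ldag * L equals (1/p) • J
  set Q : Matrix (Fin p) (Fin p) ℝ := 1 - Ldag * L with hQ
  have hLQ : L * Q = 0 := by
    rw [hQ, mul_sub, mul_one, ← mul_assoc, hpen1, sub_self]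
  have hQt : Qᵀ = Q := by rw [hQ, Matrix.transpose_sub, Matrix.transpose_one, hpen4]
  have hQsq : Q * Q = Q := by
    rw [hQ]
    have : Ldag * L * (Ldag * L) = Ldag * L := by
      rw [← mul_assoc, hpen2]
    rw [sub_mul, one_mul, mul_sub, mul_one, this, sub_self, sub_zero]
  -- columns of Q are constant
  have hcol : ∀ j i, Q i j = Q 0 j := by
    intro j
    have h0 : L.mulVec (fun i => Q i j) = 0 := by
      ext i
      have := congrFun (congrFun hLQ i) j
      simpa [Matrix.mul_apply, Matrix.mulVec, dotProduct] using this
    obtain ⟨c, hc⟩ := (hker _).1 h0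
    intro i
    have h1 := congrFun hc i
    have h2 := congrFun hc 0
    change Q i j = c at h1
    change Q 0 j = c at h2
    rw [h1, h2]
  have hconst : ∀ i j, Q i j = Q 0 0 := by
    intro i j
    have hsym : ∀ a b, Q a b = Q b a := by
      intro a b
      have := congrFun (congrFun hQt b) a
      simpa [Matrix.transpose_apply] using this
    rw [hcol j i, hsym 0 j, hcol 0 j, hsym 0 0]
  set c : ℝ := Q 0 0 with hc
  -- p * c^2 = c
  have hpc : (p : ℝ) * (c * c) = c := by
    have := congrFun (congrFun hQsq 0) 0
    rw [Matrix.mul_apply] at this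
    calc (p : ℝ) * (c * c) = ∑ _k : Fin p, c * c := by
          rw [Finset.sum_const]; simp [mul_comm]
    _ = ∑ k : Fin p, Q 0 k * Q k 0 := by
          apply Finset.sum_congr rfl; intro k _; rw [hconst 0 k, hconst k 0]
    _ = Q 0 0 := this
    _ = c := rfl
  have hcne : c ≠ 0 := by
    intro h0
    have hQ0 : Q = 0 := by ext i j; simp [hconst i j, h0]
    have hId : Ldag * L = 1 := by
      rw [hQ] at hQ0
      exact (sub_eq_zero.mp hQ0).symm
    have : (fun _ => (1:ℝ)) = (0 : Fin p → ℝ) := by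
      calc (fun _ => (1:ℝ)) = (Ldag * L).mulVec (fun _ => 1) := by rw [hId]; simp
      _ = Ldag.mulVec (L.mulVec (fun _ => 1)) := by rw [Matrix.mulVec_mulVec]
      _ = 0 := by rw [hL1]; simp
    exact one_ne_zero (congrFun this 0)
  have hcval : c = (p : ℝ)⁻¹ := by
    have h2 : (p:ℝ) * c = 1 :=
      mul_right_cancel₀ hcne (by rw [one_mul]; linarith [hpc])
    field_simp
    linarith
  have hQJ : Q = (p : ℝ)⁻¹ • J := by
    ext i j
    simp [hconst i j, hcval, hJ]
  have hLdagL : Ldag * L = 1 - (p : ℝ)⁻¹ • J := by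
    rw [← hQJ, hQ, sub_sub_cancel]
  -- J * J = p • J
  have hJJ : J * J = (p : ℝ) • J := by
    ext i j
    simp [Matrix.mul_apply, hJ, Finset.sum_const]
  -- the two-sided inverse computation
  set A := L + (p : ℝ)⁻¹ • J with hA
  set B := Ldag + (p : ℝ)⁻¹ • J with hB
  have hBA : B * A = 1 := by
    rw [hA, hB, add_mul, mul_add, mul_add, hLdagL, Matrix.mul_smul, hLdagJ,
      Matrix.smul_mul, hJL, Matrix.smul_mul, Matrix.mul_smul, hJJ]
    rw [smul_smul, smul_smul]
    have hps : (p:ℝ)⁻¹ * (p:ℝ)⁻¹ * (p:ℝ) = (p:ℝ)⁻¹ := by field_simp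
    rw [hps]
    simp
  have hAB : A * B = 1 := mul_eq_one_comm.mpr hBA
  refine ⟨⟨⟨A, B, hAB, hBA⟩, rfl⟩, Matrix.inv_eq_right_inv hAB⟩
end

section
/- The structured fusion penalty 𝒫 is decomposable with respect to a support set of index pairs: if S is a set of off-diagonal index pairs (i,j) with i ≠ j, and L, L' are K-tuples of p×p matrices such that for every pair (i,j) ∈ S the vector L'_{ij} = 0 and for every pair (i,j) ∉ S the vector L_{ij} = 0, then 𝒫(L + L') = 𝒫(L) + 𝒫(L'). -/
open Matrix BigOperators Finset

/-- The structured fusion penalty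
`𝒫(L) = Σ_{i≠j} ‖L_{ij}‖₁ + ρ Σ_{i≠j} √(L_{ij}ᵀ J̃ L_{ij})` for a `K`-tuple of
`p × p` real matrices, where `L_{ij} ∈ ℝᴷ` collects the `(i,j)` entries across the tuple. -/
noncomputable def structuredFusionPenalty {K p : ℕ} (Jt : Matrix (Fin K) (Fin K) ℝ) (ρ : ℝ)
    (L : Fin K → Matrix (Fin p) (Fin p) ℝ) : ℝ :=
  (∑ i : Fin p, ∑ j : Fin p, if i ≠ j then ∑ k : Fin K, |L k i j| else 0)
    + ρ * ∑ i : Fin p, ∑ j : Fin p,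
        if i ≠ j then
          Real.sqrt (∑ k : Fin K, ∑ k' : Fin K, L k i j * Jt k k' * L k' i j)
        else 0

/-- The structured fusion penalty is decomposable: if `S` is a set of
off-diagonal index pairs, `L'` vanishes on `S` and `L` vanishes off `S` (on off-diagonal
pairs), then `𝒫(L + L') = 𝒫(L) + 𝒫(L')`. -/
theorem structuredFusionPenalty_decomposable (K p : ℕ)
    (J : Matrix (Fin K) (Fin K) ℝ) (ρ : ℝ) (hρ : 0 ≤ ρ)
    (S : Finset (Fin p × Fin p)) (hS : ∀ q ∈ S, q.1 ≠ q.2)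
    (L L' : Fin K → Matrix (Fin p) (Fin p) ℝ)
    (hL' : ∀ i j : Fin p, (i, j) ∈ S → ∀ k, L' k i j = 0)
    (hL : ∀ i j : Fin p, i ≠ j → (i, j) ∉ S → ∀ k, L k i j = 0) :
    structuredFusionPenalty (Jᵀ * J) ρ (L + L')
      = structuredFusionPenalty (Jᵀ * J) ρ L + structuredFusionPenalty (Jᵀ * J) ρ L' := by
  unfold structuredFusionPenalty
  have key1 : ∀ i j : Fin p,
      (if i ≠ j then ∑ k : Fin K, |(L + L') k i j| else 0)
        = (if i ≠ j then ∑ k : Fin K, |L k i j| else 0)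
          + (if i ≠ j then ∑ k : Fin K, |L' k i j| else 0) := by
    intro i j
    by_cases hij : i = j
    · simp [hij]
    · simp only [if_pos (show i ≠ j from hij)]
      by_cases hmem : (i, j) ∈ S
      · have hz := hL' i j hmem
        simp [hz]
      · have hz := hL i j hij hmem
        simp [hz]
  have key2 : ∀ i j : Fin p,
      (if i ≠ j then
          Real.sqrt (∑ k : Fin K, ∑ k' : Fin K,
            (L + L') k i j * (Jᵀ * J) k k' * (L + L') k' i j) else 0)
        = (if i ≠ j then
            Real.sqrt (∑ k : Fin K, ∑ k' : Fin K, L k i j * (Jᵀ * J) k k' * L k' i j) else 0)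
          + (if i ≠ j then
            Real.sqrt (∑ k : Fin K, ∑ k' : Fin K, L' k i j * (Jᵀ * J) k k' * L' k' i j) else 0) := by
    intro i j
    by_cases hij : i = j
    · simp [hij]
    · simp only [if_pos (show i ≠ j from hij)]
      by_cases hmem : (i, j) ∈ S
      · have hz := hL' i j hmem
        simp [hz]
      · have hz := hL i j hij hmem
        simp [hz]
  have hA : (∑ i : Fin p, ∑ j : Fin p, if i ≠ j then ∑ k : Fin K, |(L + L') k i j| else 0)
      = (∑ i : Fin p, ∑ j : Fin p, if i ≠ j then ∑ k : Fin K, |L k i j| else 0)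
        + (∑ i : Fin p, ∑ j : Fin p, if i ≠ j then ∑ k : Fin K, |L' k i j| else 0) := by
    rw [← Finset.sum_add_distrib]
    refine Finset.sum_congr rfl fun i _ => ?_
    rw [← Finset.sum_add_distrib]
    exact Finset.sum_congr rfl fun j _ => key1 i j
  have hB : (∑ i : Fin p, ∑ j : Fin p,
        if i ≠ j then
          Real.sqrt (∑ k : Fin K, ∑ k' : Fin K,
            (L + L') k i j * (Jᵀ * J) k k' * (L + L') k' i j)
        else 0)
      = (∑ i : Fin p, ∑ j : Fin p,
          if i ≠ j then
            Real.sqrt (∑ k : Fin K, ∑ k' : Fin K, L k i j * (Jᵀ * J) k k' * L k' i j)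
          else 0)
        + (∑ i : Fin p, ∑ j : Fin p,
          if i ≠ j then
            Real.sqrt (∑ k : Fin K, ∑ k' : Fin K, L' k i j * (Jᵀ * J) k k' * L' k' i j)
          else 0) := by
    rw [← Finset.sum_add_distrib]
    refine Finset.sum_congr rfl fun i _ => ?_
    rw [← Finset.sum_add_distrib]
    exact Finset.sum_congr rfl fun j _ => key2 i j
  rw [hA, hB]
  ring
end

section
/- Let V be a real normed vector space, let C ⊆ V be a set that is star-shaped about the origin in the sense that t·x ∈ C whenever x ∈ C and t ∈ [0,1], and let f : V → ℝ be a convex function with f(0) = 0. Fix ε > 0 and suppose f(y) > 0 for every y ∈ C with ‖y‖ = ε. Then every x ∈ C with f(x) ≤ 0 satisfies ‖x‖ ≤ ε. -/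
open Set

/-- Let `C` be a subset of a real normed vector space that is star-shaped
about the origin, and let `f` be a convex function with `f 0 = 0`.  If `f` is strictly
positive on the sphere of radius `ε > 0` intersected with `C`, then every `x ∈ C` with
`f x ≤ 0` satisfies `‖x‖ ≤ ε`. -/
theorem norm_le_of_nonpos_on_star_shaped {V : Type*}
    [NormedAddCommGroup V] [NormedSpace ℝ V]
    (C : Set V) (hC : ∀ x ∈ C, ∀ t : ℝ, 0 ≤ t → t ≤ 1 → t • x ∈ C)
    (f : V → ℝ) (hf : ConvexOn ℝ (Set.univ : Set V) f) (hf0 : f 0 = 0)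
    (ε : ℝ) (hε : 0 < ε)
    (hpos : ∀ y ∈ C, ‖y‖ = ε → 0 < f y) :
    ∀ x ∈ C, f x ≤ 0 → ‖x‖ ≤ ε := by
  intro x hx hfx
  by_contra h
  push_neg at h
  have hxnorm : 0 < ‖x‖ := lt_trans hε h
  set t : ℝ := ε / ‖x‖ with ht
  have ht0 : 0 < t := div_pos hε hxnorm
  have ht1 : t ≤ 1 := by
    rw [ht, div_le_one hxnorm]; exact le_of_lt h
  have hy : t • x ∈ C := hC x hx t ht0.le ht1
  have hnorm : ‖t • x‖ = ε := by
    rw [norm_smul, Real.norm_eq_abs, abs_of_pos ht0, ht,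
      div_mul_cancel₀ _ (ne_of_gt hxnorm)]
  have hposy := hpos _ hy hnorm
  have hconv := hf.2 (mem_univ x) (mem_univ (0 : V)) ht0.le
    (by linarith : (0:ℝ) ≤ 1 - t) (by ring)
  simp only [smul_zero, add_zero, hf0, mul_zero] at hconv
  rw [smul_eq_mul] at hconv
  nlinarith
end

section
/- Let S be a real symmetric q×q matrix with spectral decomposition S = V Λ Vᵀ (V orthogonal, Λ diagonal) and let ρ > 0. Then the function Ξ ↦ −log det(Ξ) + ρ·tr(S Ξ) + (ρ/2)·‖Ξ‖_F², defined on real symmetric positive definite q×q matrices, attains its unique global minimum at Ξ* = V D Vᵀ, where D is the diagonal matrix with D_{ii} = (−ρΛ_{ii} + √(ρ²Λ_{ii}² + 4ρ)) / (2ρ). Equivalently, Ξ* is the unique symmetric positive definite solution of (Ξ*)⁻¹ = ρ(Ξ* + S). -/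
open Matrix BigOperators Finset

/-- The objective of the Ξ-update: `Ξ ↦ −log det Ξ + ρ tr(S Ξ) + (ρ/2) ‖Ξ‖_F²`. -/
noncomputable def xiObjective {q : ℕ} (ρ : ℝ) (S Ξ : Matrix (Fin q) (Fin q) ℝ) : ℝ :=
  -Real.log Ξ.det + ρ * (S * Ξ).trace + ρ / 2 * ∑ i : Fin q, ∑ j : Fin q, (Ξ i j) ^ 2



lemma posDef_conj {q : ℕ} {A W : Matrix (Fin q) (Fin q) ℝ} (hA : A.PosDef)
    (hW : IsUnit W.det) : (W * A * Wᵀ).PosDef := by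
  have hAs : Aᵀ = A := by
    have := hA.1
    rwa [Matrix.IsHermitian, conjTranspose_eq_transpose_of_trivial] at this
  refine Matrix.PosDef.of_dotProduct_mulVec_pos ?_ ?_
  · rw [Matrix.IsHermitian, conjTranspose_eq_transpose_of_trivial]
    rw [Matrix.transpose_mul, Matrix.transpose_mul, transpose_transpose, hAs, mul_assoc]
  · intro x hx
    have hinj : Function.Injective (Wᵀ).mulVec := by
      rw [Matrix.mulVec_injective_iff_isUnit]
      rw [Matrix.isUnit_iff_isUnit_det, Matrix.det_transpose]
      exact hW
    have hxW : Wᵀ *ᵥ x ≠ 0 := by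
      intro h
      apply hx
      apply hinj
      simpa using h
    have := hA.dotProduct_mulVec_pos hxW
    have heq : star x ⬝ᵥ ((W * A * Wᵀ) *ᵥ x) = star (Wᵀ *ᵥ x) ⬝ᵥ (A *ᵥ (Wᵀ *ᵥ x)) := by
      simp only [star_trivial, ← Matrix.mulVec_mulVec]
      rw [Matrix.dotProduct_mulVec x W, ← Matrix.mulVec_transpose]
    rw [heq]
    exact this


lemma trace_eq_sum_eigs {q : ℕ} {A : Matrix (Fin q) (Fin q) ℝ} (hA : A.IsHermitian) :
    A.trace = ∑ i, hA.eigenvalues i := by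
  conv_lhs => rw [hA.spectral_theorem]
  rw [Unitary.conjStarAlgAut_apply]
  rw [Matrix.trace_mul_cycle]
  rw [show (star (hA.eigenvectorUnitary : Matrix (Fin q) (Fin q) ℝ)) *
      (hA.eigenvectorUnitary : Matrix (Fin q) (Fin q) ℝ) = 1 from Unitary.coe_star_mul_self _,
    one_mul, Matrix.trace_diagonal]
  simp

lemma trace_sub_logdet {q : ℕ} {C : Matrix (Fin q) (Fin q) ℝ} (hC : C.PosDef) :
    (q : ℝ) + Real.log C.det ≤ C.trace := by
  have hdet : C.det = ∏ i, hC.1.eigenvalues i := by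
    rw [hC.1.det_eq_prod_eigenvalues]; norm_num
  have hpos := hC.eigenvalues_pos
  rw [trace_eq_sum_eigs hC.1, hdet, Real.log_prod (fun i _ => (hpos i).ne')]
  have : ∀ i ∈ Finset.univ, (1 : ℝ) + Real.log (hC.1.eigenvalues i) ≤ hC.1.eigenvalues i := by
    intro i _
    have := Real.log_le_sub_one_of_pos (hpos i)
    linarith
  calc (q : ℝ) + ∑ i, Real.log (hC.1.eigenvalues i)
      = ∑ i : Fin q, (1 + Real.log (hC.1.eigenvalues i)) := by
        rw [Finset.sum_add_distrib]; simp
    _ ≤ ∑ i, hC.1.eigenvalues i := Finset.sum_le_sum this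

lemma symm_entries {q : ℕ} {A : Matrix (Fin q) (Fin q) ℝ} (hA : A.IsHermitian)
    (i j : Fin q) : A j i = A i j := by
  have := congr_fun (congr_fun hA.eq i) j
  simpa using this

open scoped MatrixOrder in
lemma key_ineq {q : ℕ} {ρ : ℝ} (hρ : 0 < ρ) (S A B : Matrix (Fin q) (Fin q) ℝ)
    (hA : A.PosDef) (hB : B.PosDef) (hfix : B⁻¹ = ρ • (B + S)) :
    xiObjective ρ S B + ρ/2 * ∑ i, ∑ j, (A i j - B i j)^2 ≤ xiObjective ρ S A := by
  have hBdet := hB.det_pos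
  have hAdet := hA.det_pos
  have hBu : IsUnit B.det := isUnit_iff_ne_zero.2 hBdet.ne'
  have hBinv : (B⁻¹).PosDef := hB.inv
  -- trace identities
  have hS' : ρ • S = B⁻¹ - ρ • B := by rw [hfix, smul_add]; abel
  have hSA : ρ * (S * A).trace = (B⁻¹ * A).trace - ρ * (B * A).trace := by
    have : ((ρ • S) * A).trace = ((B⁻¹ - ρ • B) * A).trace := by rw [hS']
    simpa [Matrix.smul_mul, Matrix.sub_mul, Matrix.trace_sub, Matrix.trace_smul, smul_eq_mul]
      using this
  have hSB : ρ * (S * B).trace = (q : ℝ) - ρ * (B * B).trace := by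
    have : ((ρ • S) * B).trace = ((B⁻¹ - ρ • B) * B).trace := by rw [hS']
    have h1 : B⁻¹ * B = 1 := Matrix.nonsing_inv_mul B hBu
    simpa [Matrix.smul_mul, Matrix.sub_mul, Matrix.trace_sub, Matrix.trace_smul, smul_eq_mul,
      h1, Matrix.trace_one] using this
  have e1 : (B * A).trace = ∑ i, ∑ j, B i j * A i j := by
    simp only [Matrix.trace, Matrix.diag, Matrix.mul_apply]
    exact Finset.sum_congr rfl fun i _ => Finset.sum_congr rfl fun j _ => by
      rw [symm_entries hA.1 j i]
  have e2 : (B * B).trace = ∑ i, ∑ j, (B i j)^2 := by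
    simp only [Matrix.trace, Matrix.diag, Matrix.mul_apply]
    exact Finset.sum_congr rfl fun i _ => Finset.sum_congr rfl fun j _ => by
      rw [symm_entries hB.1 j i]; ring
  have esq : ∑ i, ∑ j, (A i j - B i j)^2
      = (∑ i, ∑ j, (A i j)^2) - 2 * (∑ i, ∑ j, B i j * A i j) + ∑ i, ∑ j, (B i j)^2 := by
    have h : ∀ i j : Fin q, (A i j - B i j)^2
        = (A i j)^2 - 2*(B i j * A i j) + (B i j)^2 := fun i j => by ring
    simp_rw [h, Finset.sum_add_distrib, Finset.sum_sub_distrib, ← Finset.mul_sum]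
  have lllog : Real.log ((B⁻¹).det * A.det) = -Real.log B.det + Real.log A.det := by
    rw [Real.log_mul hBinv.det_pos.ne' hAdet.ne', Matrix.det_nonsing_inv,
      Ring.inverse_eq_inv', Real.log_inv]
  -- positivity of the bracket
  have P : 0 ≤ (B⁻¹ * A).trace - (q : ℝ) - Real.log ((B⁻¹).det * A.det) := by
    set W := CFC.sqrt (B⁻¹) with hWdef
    have hWH : W.IsHermitian := (CFC.sqrt_nonneg (B⁻¹)).posSemidef.1
    have hWW : W * W = B⁻¹ := CFC.sqrt_mul_sqrt_self (B⁻¹) hBinv.posSemidef.nonneg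
    have hWt : Wᵀ = W := by
      have := hWH.eq; rwa [conjTranspose_eq_transpose_of_trivial] at this
    have hWu : IsUnit W.det := by
      have : W.det * W.det = (B⁻¹).det := by rw [← Matrix.det_mul, hWW]
      have h0 : W.det ≠ 0 := by
        intro h; rw [h, mul_zero] at this; exact hBinv.det_pos.ne (by rw [this])
      exact isUnit_iff_ne_zero.2 h0
    have hC : (W * A * W).PosDef := by
      have := posDef_conj hA hWu
      rwa [hWt] at this
    have htr : (W * A * W).trace = (B⁻¹ * A).trace := by
      rw [Matrix.trace_mul_cycle W A W, hWW]
    have hdet : (W * A * W).det = (B⁻¹).det * A.det := by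
      rw [Matrix.det_mul, Matrix.det_mul, ← hWW, Matrix.det_mul]; ring
    have := trace_sub_logdet hC
    rw [htr, hdet] at this
    linarith
  have E : xiObjective ρ S A - xiObjective ρ S B - ρ/2 * ∑ i, ∑ j, (A i j - B i j)^2
      = (B⁻¹ * A).trace - (q : ℝ) - Real.log ((B⁻¹).det * A.det) := by
    simp only [xiObjective]
    linear_combination hSA - hSB - ρ * e1 + ρ * e2 - (ρ/2) * esq + lllog
  linarith

/-- Let `S = V Λ Vᵀ` be a real symmetric `q × q` matrix with `V` orthogonal
and `Λ` diagonal, and let `ρ > 0`.  Then `Ξ* = V D Vᵀ`, with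
`D_{ii} = (−ρΛ_{ii} + √(ρ²Λ_{ii}² + 4ρ))/(2ρ)`, is symmetric positive definite, is the unique
global minimizer of `Ξ ↦ −log det Ξ + ρ tr(S Ξ) + (ρ/2)‖Ξ‖_F²` over symmetric positive
definite matrices, and is the unique symmetric positive definite solution of
`Ξ⁻¹ = ρ(Ξ + S)`. -/
theorem xi_update_closed_form (q : ℕ) (ρ : ℝ) (hρ : 0 < ρ)
    (S V : Matrix (Fin q) (Fin q) ℝ) (Λ : Fin q → ℝ)
    (hV : Vᵀ * V = 1) (hVV : V * Vᵀ = 1)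
    (hS : S = V * Matrix.diagonal Λ * Vᵀ) :
    (V * Matrix.diagonal (fun i =>
        (-ρ * Λ i + Real.sqrt (ρ ^ 2 * (Λ i) ^ 2 + 4 * ρ)) / (2 * ρ)) * Vᵀ).PosDef
    ∧ (∀ Ξ : Matrix (Fin q) (Fin q) ℝ, Ξ.PosDef →
        xiObjective ρ S (V * Matrix.diagonal (fun i =>
            (-ρ * Λ i + Real.sqrt (ρ ^ 2 * (Λ i) ^ 2 + 4 * ρ)) / (2 * ρ)) * Vᵀ)
          ≤ xiObjective ρ S Ξ)
    ∧ (∀ Ξ : Matrix (Fin q) (Fin q) ℝ, Ξ.PosDef →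
        xiObjective ρ S Ξ
            = xiObjective ρ S (V * Matrix.diagonal (fun i =>
                (-ρ * Λ i + Real.sqrt (ρ ^ 2 * (Λ i) ^ 2 + 4 * ρ)) / (2 * ρ)) * Vᵀ)
          → Ξ = V * Matrix.diagonal (fun i =>
              (-ρ * Λ i + Real.sqrt (ρ ^ 2 * (Λ i) ^ 2 + 4 * ρ)) / (2 * ρ)) * Vᵀ)
    ∧ (V * Matrix.diagonal (fun i =>
          (-ρ * Λ i + Real.sqrt (ρ ^ 2 * (Λ i) ^ 2 + 4 * ρ)) / (2 * ρ)) * Vᵀ)⁻¹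
        = ρ • ((V * Matrix.diagonal (fun i =>
            (-ρ * Λ i + Real.sqrt (ρ ^ 2 * (Λ i) ^ 2 + 4 * ρ)) / (2 * ρ)) * Vᵀ) + S)
    ∧ (∀ Ξ : Matrix (Fin q) (Fin q) ℝ, Ξ.PosDef → Ξ⁻¹ = ρ • (Ξ + S) →
        Ξ = V * Matrix.diagonal (fun i =>
            (-ρ * Λ i + Real.sqrt (ρ ^ 2 * (Λ i) ^ 2 + 4 * ρ)) / (2 * ρ)) * Vᵀ) := by
  set d : Fin q → ℝ := fun i =>
    (-ρ * Λ i + Real.sqrt (ρ ^ 2 * (Λ i) ^ 2 + 4 * ρ)) / (2 * ρ) with hd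
  set Ξs : Matrix (Fin q) (Fin q) ℝ := V * Matrix.diagonal d * Vᵀ with hΞs
  -- scalar facts
  have hs_nonneg : ∀ i, (0:ℝ) ≤ ρ ^ 2 * (Λ i) ^ 2 + 4 * ρ := fun i => by positivity
  have hd_pos : ∀ i, 0 < d i := by
    intro i
    have h1 : Real.sqrt ((ρ * Λ i)^2) < Real.sqrt (ρ ^ 2 * (Λ i) ^ 2 + 4 * ρ) :=
      Real.sqrt_lt_sqrt (sq_nonneg _) (by nlinarith)
    rw [Real.sqrt_sq_eq_abs] at h1
    have h2 := le_abs_self (ρ * Λ i)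
    have : 0 < -ρ * Λ i + Real.sqrt (ρ ^ 2 * (Λ i) ^ 2 + 4 * ρ) := by linarith
    exact div_pos this (by linarith)
  have hd_eq : ∀ i, ρ * d i * d i + ρ * Λ i * d i = 1 := by
    intro i
    have hs := Real.sq_sqrt (hs_nonneg i)
    have e : 2 * ρ * d i = -ρ * Λ i + Real.sqrt (ρ ^ 2 * (Λ i) ^ 2 + 4 * ρ) := by
      simp only [hd]
      field_simp
    have h4 : (4*ρ) * (ρ * d i * d i + ρ * Λ i * d i) = (4*ρ) * 1 := by
      linear_combination (2 * ρ * d i + ρ * Λ i + Real.sqrt (ρ ^ 2 * (Λ i) ^ 2 + 4 * ρ)) * e + hs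
    exact mul_left_cancel₀ (by positivity) h4
  -- matrix facts
  have hVu : IsUnit V.det := by
    have := congrArg Matrix.det hVV
    rw [Matrix.det_mul, Matrix.det_one] at this
    exact IsUnit.of_mul_eq_one _ this
  have hconj : ∀ a b : Fin q → ℝ,
      (V * Matrix.diagonal a * Vᵀ) * (V * Matrix.diagonal b * Vᵀ)
        = V * Matrix.diagonal (fun i => a i * b i) * Vᵀ := by
    intro a b
    have h2 : Matrix.diagonal a * Matrix.diagonal b
        = Matrix.diagonal (fun i => a i * b i) := by
      rw [Matrix.diagonal_mul_diagonal]
    calc V * Matrix.diagonal a * Vᵀ * (V * Matrix.diagonal b * Vᵀ)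
        = V * (Matrix.diagonal a * ((Vᵀ * V) * (Matrix.diagonal b * Vᵀ))) := by
          simp only [mul_assoc]
      _ = V * Matrix.diagonal a * Matrix.diagonal b * Vᵀ := by
          rw [hV, one_mul, ← mul_assoc, ← mul_assoc]
      _ = V * Matrix.diagonal (fun i => a i * b i) * Vᵀ := by
          rw [mul_assoc V, h2]
  have hPD : Ξs.PosDef := by
    rw [hΞs]
    exact posDef_conj (Matrix.posDef_diagonal_iff.mpr hd_pos) hVu
  have hinv : Ξs⁻¹ = V * Matrix.diagonal (fun i => ρ * (d i + Λ i)) * Vᵀ := by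
    apply Matrix.inv_eq_right_inv
    rw [hΞs, hconj]
    have : (fun i => d i * (ρ * (d i + Λ i))) = fun _ => (1:ℝ) := by
      funext i
      linear_combination hd_eq i
    rw [this, Matrix.diagonal_one, mul_one, hVV]
  have hfix : Ξs⁻¹ = ρ • (Ξs + S) := by
    rw [hinv, hS, hΞs]
    have h1 : V * Matrix.diagonal d * Vᵀ + V * Matrix.diagonal Λ * Vᵀ
        = V * Matrix.diagonal (fun i => d i + Λ i) * Vᵀ := by
      rw [← Matrix.diagonal_add, Matrix.mul_add, Matrix.add_mul]
    rw [h1, ← Matrix.smul_mul, ← Matrix.mul_smul, ← Matrix.diagonal_smul]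
    congr 1
  have hzero : ∀ (X Y : Matrix (Fin q) (Fin q) ℝ),
      (∑ i, ∑ j, (X i j - Y i j)^2) ≤ 0 → X = Y := by
    intro X Y h
    have hnn : (0:ℝ) ≤ ∑ i, ∑ j, (X i j - Y i j)^2 := by positivity
    have h0 : ∑ i, ∑ j, (X i j - Y i j)^2 = 0 := le_antisymm h hnn
    ext i j
    have h1 := (Finset.sum_eq_zero_iff_of_nonneg
      (fun i _ => Finset.sum_nonneg fun j _ => sq_nonneg _)).1 h0 i (Finset.mem_univ i)
    have h2 := (Finset.sum_eq_zero_iff_of_nonneg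
      (fun j _ => sq_nonneg _)).1 h1 j (Finset.mem_univ j)
    have h3 : X i j - Y i j = 0 := by
      nlinarith [sq_nonneg (X i j - Y i j)]
    linarith
  refine ⟨hPD, ?_, ?_, hfix, ?_⟩
  · intro Ξ hΞ
    have := key_ineq hρ S Ξ Ξs hΞ hPD hfix
    have hnn : (0:ℝ) ≤ ∑ i, ∑ j, (Ξ i j - Ξs i j)^2 := by positivity
    nlinarith
  · intro Ξ hΞ heq
    have := key_ineq hρ S Ξ Ξs hΞ hPD hfix
    apply hzero
    nlinarith
  · intro Ξ hΞ hfixΞ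
    have h1 := key_ineq hρ S Ξs Ξ hPD hΞ hfixΞ
    have h2 := key_ineq hρ S Ξ Ξs hΞ hPD hfix
    have hnn : (0:ℝ) ≤ ∑ i, ∑ j, (Ξ i j - Ξs i j)^2 := by positivity
    have := hzero Ξs Ξ (by nlinarith)
    exact this.symm
end

section
/- Let p ≥ 2, let Σ̂ be a fixed p×p real matrix, let M = (1/p)·1 1ᵀ, and define F(X) = log det(X + M) − tr(Σ̂ X) on p×p real matrices. If L is a symmetric positive semidefinite matrix whose kernel is exactly the span of the all-ones vector 1, then F is Fréchet differentiable at L and its derivative is the linear map H ↦ tr((L† + M − Σ̂) H), where L† is the Moore–Penrose pseudoinverse of L. -/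
open Matrix BigOperators

attribute [local instance] Matrix.normedAddCommGroup Matrix.normedSpace

/-- The determinant as a continuous multilinear map in the rows. -/
noncomputable def detCML (p : ℕ) :
    ContinuousMultilinearMap ℝ (fun _ : Fin p => (Fin p → ℝ)) ℝ :=
  MultilinearMap.mkContinuous (Matrix.detRowAlternating).toMultilinearMap
    (Nat.factorial p) (by
      intro m
      have h : (Matrix.detRowAlternating (R := ℝ) (n := Fin p)).toMultilinearMap m
          = (Matrix.of m).det := rfl
      rw [h, Matrix.det_apply']
      calc ‖∑ σ : Equiv.Perm (Fin p), (Equiv.Perm.sign σ : ℝ) * ∏ i, Matrix.of m (σ i) i‖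
          ≤ ∑ σ : Equiv.Perm (Fin p), ‖(Equiv.Perm.sign σ : ℝ) * ∏ i, Matrix.of m (σ i) i‖ :=
            norm_sum_le _ _
        _ ≤ ∑ _σ : Equiv.Perm (Fin p), ∏ i, ‖m i‖ := by
            refine Finset.sum_le_sum fun σ _ => ?_
            have hsign : ‖((Equiv.Perm.sign σ : ℤ) : ℝ)‖ = 1 := by
              rcases Int.units_eq_one_or (Equiv.Perm.sign σ) with h1 | h1 <;> simp [h1]
            rw [norm_mul, hsign, one_mul]
            have h2 : ‖∏ i, Matrix.of m (σ i) i‖ ≤ ∏ i, ‖m (σ i)‖ := by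
              rw [norm_prod]
              exact Finset.prod_le_prod (fun i _ => norm_nonneg _)
                (fun i _ => norm_le_pi_norm (m (σ i)) i)
            calc ‖∏ i, Matrix.of m (σ i) i‖ ≤ ∏ i, ‖m (σ i)‖ := h2
              _ = ∏ i, ‖m i‖ := Equiv.prod_comp σ (fun i => ‖m i‖)
        _ = (Nat.factorial p : ℝ) * ∏ i, ‖m i‖ := by
            rw [Finset.sum_const, Finset.card_univ, Fintype.card_perm, nsmul_eq_mul]
            norm_num)

lemma detCML_apply (p : ℕ) (m : Fin p → Fin p → ℝ) :
    detCML p m = (Matrix.of m).det := rfl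

/-- Directional derivative of the determinant: sum of determinants with rows replaced. -/
lemma sum_det_updateRow (p : ℕ) (A H : Matrix (Fin p) (Fin p) ℝ) :
    ∑ i, (A.updateRow i (H i)).det = (A.adjugate * H).trace := by
  have key : ∀ i, (A.updateRow i (H i)).det = ∑ j, H i j * A.adjugate j i := by
    intro i
    have hrow : H i = ∑ j, H i j • (Pi.single j 1 : Fin p → ℝ) := by
      ext k
      simp [Pi.single_apply, Finset.sum_ite_eq', mul_comm]
    calc (A.updateRow i (H i)).det
        = (Matrix.detRowAlternating.toMultilinearMap.toLinearMap A i) (H i) := rfl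
      _ = ∑ j, H i j * A.adjugate j i := by
          conv_lhs => rw [hrow, map_sum]
          refine Finset.sum_congr rfl fun j _ => ?_
          rw [_root_.map_smul]
          have : (Matrix.detRowAlternating.toMultilinearMap.toLinearMap A i)
              (Pi.single j (1:ℝ)) = A.adjugate j i := (Matrix.adjugate_apply A j i).symm
          rw [this, smul_eq_mul]
  rw [Finset.sum_congr rfl fun i _ => key i]
  rw [Matrix.trace]
  rw [Finset.sum_comm]
  refine Finset.sum_congr rfl fun j _ => ?_
  simp [Matrix.diag, Matrix.mul_apply, mul_comm]

/-- `Ldag + M` is a left inverse of `L + M`. -/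
lemma left_inv_lemma (p : ℕ) (hp : 2 ≤ p) (L Ldag : Matrix (Fin p) (Fin p) ℝ)
    (hL : L.PosSemidef)
    (hker : ∀ x : Fin p → ℝ, L.mulVec x = 0 ↔ ∃ c : ℝ, x = fun _ => c)
    (hpen1 : L * Ldag * L = L) (hpen2 : Ldag * L * Ldag = Ldag)
    (hpen3 : (L * Ldag)ᵀ = L * Ldag) (hpen4 : (Ldag * L)ᵀ = Ldag * L) :
    (Ldag + (p : ℝ)⁻¹ • Matrix.of (fun _ _ : Fin p => (1 : ℝ)))
      * (L + (p : ℝ)⁻¹ • Matrix.of (fun _ _ : Fin p => (1 : ℝ))) = 1 := by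
  have hp0 : (p : ℝ) ≠ 0 := by positivity
  set J : Matrix (Fin p) (Fin p) ℝ := Matrix.of (fun _ _ : Fin p => (1 : ℝ)) with hJ
  have hLt : Lᵀ = L := by
    have := hL.1
    simpa [Matrix.IsHermitian, Matrix.conjTranspose_eq_transpose_of_trivial] using this
  have hones : L.mulVec (fun _ => (1:ℝ)) = 0 := (hker _).mpr ⟨1, rfl⟩
  have hLJ : L * J = 0 := by
    ext i j
    have := congrFun hones i
    simpa [hJ, Matrix.mul_apply, Matrix.mulVec, dotProduct] using this
  have hJt : Jᵀ = J := by ext i j; simp [hJ]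
  have hJL : J * L = 0 := by
    have := congrArg Matrix.transpose hLJ
    rw [Matrix.transpose_mul, hJt, hLt] at this
    simpa using this
  have hDe : Ldag = Ldag * Ldagᵀ * L := by
    calc Ldag = Ldag * L * Ldag := hpen2.symm
      _ = Ldag * (L * Ldag) := by rw [mul_assoc]
      _ = Ldag * (L * Ldag)ᵀ := by rw [hpen3]
      _ = Ldag * (Ldagᵀ * Lᵀ) := by rw [Matrix.transpose_mul]
      _ = Ldag * Ldagᵀ * L := by rw [hLt, mul_assoc]
  have hDe' : Ldag = L * Ldagᵀ * Ldag := by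
    calc Ldag = Ldag * L * Ldag := hpen2.symm
      _ = (Ldag * L)ᵀ * Ldag := by rw [hpen4]
      _ = Lᵀ * Ldagᵀ * Ldag := by rw [Matrix.transpose_mul]
      _ = L * Ldagᵀ * Ldag := by rw [hLt]
  have hDJ : Ldag * J = 0 := by
    calc Ldag * J = Ldag * Ldagᵀ * L * J := by rw [← hDe]
      _ = Ldag * Ldagᵀ * (L * J) := by rw [mul_assoc]
      _ = 0 := by rw [hLJ, mul_zero]
  have hJD : J * Ldag = 0 := by
    calc J * Ldag = J * (L * Ldagᵀ * Ldag) := by rw [← hDe']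
      _ = J * L * Ldagᵀ * Ldag := by rw [← mul_assoc, ← mul_assoc]
      _ = 0 := by rw [hJL, Matrix.zero_mul, Matrix.zero_mul]
  have hJJ : J * J = (p : ℝ) • J := by
    ext i j; simp [hJ, Matrix.mul_apply]
  have hQJ : Ldag * L * J = 0 := by rw [mul_assoc, hLJ, mul_zero]
  have hJQ : J * (Ldag * L) = 0 := by rw [← mul_assoc, hJD, Matrix.zero_mul]
  have hLQ : L * (Ldag * L) = L := by rw [← mul_assoc, hpen1]
  set A0 : Matrix (Fin p) (Fin p) ℝ := 1 - Ldag * L - (p : ℝ)⁻¹ • J with hA0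
  have hLA0 : L * A0 = 0 := by
    rw [hA0, Matrix.mul_sub, Matrix.mul_sub, mul_one, hLQ, Matrix.mul_smul, hLJ]
    simp
  have hJA0 : J * A0 = 0 := by
    rw [hA0, Matrix.mul_sub, Matrix.mul_sub, mul_one, hJQ, Matrix.mul_smul, hJJ]
    rw [smul_smul, inv_mul_cancel₀ hp0]
    simp
  have hA0zero : A0 = 0 := by
    ext i j
    have hcol : L.mulVec (A0.mulVec (Pi.single j 1)) = 0 := by
      rw [Matrix.mulVec_mulVec, hLA0, Matrix.zero_mulVec]
    obtain ⟨c, hc⟩ := (hker _).mp hcol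
    have hJcol : J.mulVec (A0.mulVec (Pi.single j 1)) = 0 := by
      rw [Matrix.mulVec_mulVec, hJA0, Matrix.zero_mulVec]
    rw [hc] at hJcol
    have hi : (J.mulVec (fun _ => c)) i = 0 := by rw [hJcol]; rfl
    have hpc : (p : ℝ) * c = 0 := by
      simpa [hJ, Matrix.mulVec, dotProduct, mul_comm] using hi
    have hc0 : c = 0 := by
      rcases mul_eq_zero.mp hpc with h | h
      · exact absurd h hp0
      · exact h
    have h2 := congrFun hc i
    rw [hc0] at h2
    simpa [Matrix.mulVec_single, mul_one] using h2
  have hQM : Ldag * L + (p : ℝ)⁻¹ • J = 1 := by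
    have h : 1 - (Ldag * L + (p : ℝ)⁻¹ • J) = 0 := by
      rw [← sub_sub]; exact hA0zero
    exact (sub_eq_zero.mp h).symm
  have expand : (Ldag + (p:ℝ)⁻¹ • J) * (L + (p:ℝ)⁻¹ • J)
      = Ldag * L + (p:ℝ)⁻¹ • (Ldag * J) + (p:ℝ)⁻¹ • (J * L)
        + ((p:ℝ)⁻¹ * (p:ℝ)⁻¹) • (J * J) := by
    rw [Matrix.add_mul, Matrix.mul_add, Matrix.mul_add, Matrix.mul_smul,
      Matrix.smul_mul, Matrix.smul_mul, Matrix.mul_smul, smul_smul]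
    abel
  have hps : (p:ℝ)⁻¹ * (p:ℝ)⁻¹ * (p:ℝ) = (p:ℝ)⁻¹ := by field_simp
  rw [expand, hDJ, hJL, hJJ, smul_zero, add_zero, add_zero, smul_smul, hps]
  exact hQM

/-- Let `p ≥ 2`, `Σ̂` a fixed `p × p` real matrix, `M = (1/p) 1 1ᵀ`, and
`F X = log det (X + M) − tr (Σ̂ X)`.  If `L` is symmetric positive semidefinite with kernel
exactly the span of the all-ones vector, and `Ldag` is its Moore–Penrose pseudoinverse
(characterized by the four Penrose conditions), then `F` is Fréchet differentiable at `L`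
with derivative `H ↦ tr ((L† + M − Σ̂) H)`. -/
theorem hasFDerivAt_logdet_loss (p : ℕ) (hp : 2 ≤ p)
    (Sighat L Ldag : Matrix (Fin p) (Fin p) ℝ) (hL : L.PosSemidef)
    (hker : ∀ x : Fin p → ℝ, L.mulVec x = 0 ↔ ∃ c : ℝ, x = fun _ => c)
    (hpen1 : L * Ldag * L = L) (hpen2 : Ldag * L * Ldag = Ldag)
    (hpen3 : (L * Ldag)ᵀ = L * Ldag) (hpen4 : (Ldag * L)ᵀ = Ldag * L) :
    HasFDerivAt
      (fun X : Matrix (Fin p) (Fin p) ℝ =>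
        Real.log (X + (p : ℝ)⁻¹ • Matrix.of (fun _ _ : Fin p => (1 : ℝ))).det
          - (Sighat * X).trace)
      (LinearMap.toContinuousLinearMap
        ((Matrix.traceLinearMap (Fin p) ℝ ℝ).comp
          (LinearMap.mulLeft ℝ
            (Ldag + (p : ℝ)⁻¹ • Matrix.of (fun _ _ : Fin p => (1 : ℝ)) - Sighat))))
      L := by
  have hinv := left_inv_lemma p hp L Ldag hL hker hpen1 hpen2 hpen3 hpen4
  set Mm : Matrix (Fin p) (Fin p) ℝ := (p : ℝ)⁻¹ • Matrix.of (fun _ _ : Fin p => (1 : ℝ))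
    with hMm
  set A : Matrix (Fin p) (Fin p) ℝ := L + Mm with hA
  have hdetu : IsUnit A.det := Matrix.isUnit_det_of_left_inverse hinv
  have hdet0 : A.det ≠ 0 := hdetu.ne_zero
  have hAinv : A⁻¹ = Ldag + Mm := Matrix.inv_eq_left_inv hinv
  let phi : Matrix (Fin p) (Fin p) ℝ →L[ℝ] ℝ := (detCML p).linearDeriv A
  have h1 : HasFDerivAt (fun X : Matrix (Fin p) (Fin p) ℝ => X.det)
      phi A := by
    have := (detCML p).hasFDerivAt (x := A)
    have hfun : (fun X : Matrix (Fin p) (Fin p) ℝ => X.det) = ⇑(detCML p) := by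
      funext X; rw [detCML_apply p X]; rfl
    rw [hfun]
    exact this
  have h2 : HasFDerivAt (fun X : Matrix (Fin p) (Fin p) ℝ => X + Mm)
      (ContinuousLinearMap.id ℝ (Matrix (Fin p) (Fin p) ℝ)) L :=
    (hasFDerivAt_id L).add_const Mm
  have h3 : HasFDerivAt (fun X : Matrix (Fin p) (Fin p) ℝ => (X + Mm).det)
      phi L := by
    have := h1.comp L h2
    exact this
  have h4 : HasFDerivAt (fun X : Matrix (Fin p) (Fin p) ℝ => Real.log ((X + Mm).det))
      ((A.det)⁻¹ • phi) L := by
    have := (Real.hasDerivAt_log hdet0).comp_hasFDerivAt L h3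
    exact this
  have h5 : HasFDerivAt (fun X : Matrix (Fin p) (Fin p) ℝ => (Sighat * X).trace)
      (LinearMap.toContinuousLinearMap
        ((Matrix.traceLinearMap (Fin p) ℝ ℝ).comp (LinearMap.mulLeft ℝ Sighat))) L := by
    exact (LinearMap.toContinuousLinearMap
        ((Matrix.traceLinearMap (Fin p) ℝ ℝ).comp (LinearMap.mulLeft ℝ Sighat))).hasFDerivAt
  have h6 := h4.sub h5
  have heq : ((A.det)⁻¹ • phi) -
      (LinearMap.toContinuousLinearMap
        ((Matrix.traceLinearMap (Fin p) ℝ ℝ).comp (LinearMap.mulLeft ℝ Sighat)))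
      = (LinearMap.toContinuousLinearMap
        ((Matrix.traceLinearMap (Fin p) ℝ ℝ).comp
          (LinearMap.mulLeft ℝ (Ldag + Mm - Sighat)))) := by
    ext H
    have hlin : phi H = ∑ i, (A.updateRow i (H i)).det := by
      show ((detCML p).linearDeriv A) H = ∑ i, (A.updateRow i (H i)).det
      erw [ContinuousMultilinearMap.linearDeriv_apply]
      refine Finset.sum_congr rfl fun i _ => ?_
      rw [detCML_apply]
      rfl
    simp only [ContinuousLinearMap.coe_sub', Pi.sub_apply, ContinuousLinearMap.coe_smul',
      Pi.smul_apply, LinearMap.coe_toContinuousLinearMap', LinearMap.coe_comp,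
      Function.comp_apply, LinearMap.mulLeft_apply, Matrix.traceLinearMap_apply]
    rw [hlin, sum_det_updateRow]
    have hadj : (A.det)⁻¹ • (A.adjugate * H) = A⁻¹ * H := by
      rw [Matrix.inv_def, Ring.inverse_eq_inv, Matrix.smul_mul]
    calc (A.det)⁻¹ • (A.adjugate * H).trace - (Sighat * H).trace
        = ((A.det)⁻¹ • (A.adjugate * H)).trace - (Sighat * H).trace := by
          rw [Matrix.trace_smul]
      _ = (A⁻¹ * H).trace - (Sighat * H).trace := by rw [hadj]
      _ = ((Ldag + Mm) * H).trace - (Sighat * H).trace := by rw [hAinv]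
      _ = ((Ldag + Mm - Sighat) * H).trace := by
          rw [Matrix.sub_mul, Matrix.trace_sub]
  rw [← heq]
  exact h6
end

section
/- Let V be the real inner product space of K-tuples of p×p real matrices with inner product ⟨A,B⟩ = Σ_k tr(A_kᵀ B_k), let 𝓕 : V → ℝ be concave and differentiable at L*, let S be a set of off-diagonal index pairs containing the support of L*, let ρₙ > 0, and let Δ̂ ∈ V. Suppose (a) −𝓕(L* + Δ̂) + 𝓕(L*) + ρₙ(𝒫(L* + Δ̂) − 𝒫(L*)) ≤ 0, and (b) |⟨∇𝓕(L*), Δ̂⟩| ≤ (ρₙ/2)·(𝒫(Δ̂_S) + 𝒫(Δ̂_{S⊥})). Then 𝒫(Δ̂_{S⊥}) ≤ 3·𝒫(Δ̂_S), i.e., Δ̂ lies in the cone ℂ = {Δ : 𝒫(Δ_{S⊥}) ≤ 3𝒫(Δ_S)}. -/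
open Matrix BigOperators Finset

attribute [local instance] Matrix.normedAddCommGroup Matrix.normedSpace

/-- The projection `Δ_S` onto a set `S` of off-diagonal index pairs. -/
def tupleProjOn {K p : ℕ} (S : Finset (Fin p × Fin p))
    (Δ : Fin K → Matrix (Fin p) (Fin p) ℝ) : Fin K → Matrix (Fin p) (Fin p) ℝ :=
  fun k => Matrix.of fun i j => if i ≠ j ∧ (i, j) ∈ S then Δ k i j else 0

/-- The projection `Δ_{S⊥}` onto the off-diagonal pairs outside `S`. -/
def tupleProjOffOn {K p : ℕ} (S : Finset (Fin p × Fin p))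
    (Δ : Fin K → Matrix (Fin p) (Fin p) ℝ) : Fin K → Matrix (Fin p) (Fin p) ℝ :=
  fun k => Matrix.of fun i j => if i ≠ j ∧ (i, j) ∉ S then Δ k i j else 0

/-! ### Auxiliary seminorm -/

/-- The per-entry penalty function `φ(x) = ‖x‖₁ + ρ √(xᵀ JᵀJ x)`. -/
noncomputable def phiAux {K : ℕ} (J : Matrix (Fin K) (Fin K) ℝ) (ρ : ℝ) (x : Fin K → ℝ) : ℝ :=
  (∑ k, |x k|) + ρ * Real.sqrt (∑ k, ∑ k', x k * (Jᵀ * J) k k' * x k')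

lemma quad_form_eq {K : ℕ} (J : Matrix (Fin K) (Fin K) ℝ) (x : Fin K → ℝ) :
    ∑ k, ∑ k', x k * (Jᵀ * J) k k' * x k' = ∑ m, (∑ k, J m k * x k) ^ 2 := by
  have h1 : ∀ m : Fin K, (∑ k, J m k * x k) ^ 2
      = ∑ k, ∑ k', x k * (J m k * J m k') * x k' := by
    intro m
    rw [sq, Finset.sum_mul_sum]
    exact Finset.sum_congr rfl fun k _ => Finset.sum_congr rfl fun k' _ => by ring
  simp only [h1]
  calc ∑ k, ∑ k', x k * (Jᵀ * J) k k' * x k'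
      = ∑ k, ∑ k', ∑ m, x k * (J m k * J m k') * x k' := by
        refine Finset.sum_congr rfl fun k _ => Finset.sum_congr rfl fun k' _ => ?_
        simp only [Matrix.mul_apply, Matrix.transpose_apply, Finset.mul_sum, Finset.sum_mul]
    _ = ∑ k, ∑ m, ∑ k', x k * (J m k * J m k') * x k' :=
        Finset.sum_congr rfl fun k _ => Finset.sum_comm
    _ = ∑ m, ∑ k, ∑ k', x k * (J m k * J m k') * x k' := Finset.sum_comm

lemma phiAux_nonneg {K : ℕ} (J : Matrix (Fin K) (Fin K) ℝ) {ρ : ℝ} (hρ : 0 ≤ ρ)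
    (x : Fin K → ℝ) : 0 ≤ phiAux J ρ x :=
  add_nonneg (Finset.sum_nonneg fun _ _ => abs_nonneg _)
    (mul_nonneg hρ (Real.sqrt_nonneg _))

lemma phiAux_zero {K : ℕ} (J : Matrix (Fin K) (Fin K) ℝ) (ρ : ℝ) :
    phiAux J ρ (fun _ => 0) = 0 := by
  simp [phiAux]

lemma phiAux_neg {K : ℕ} (J : Matrix (Fin K) (Fin K) ℝ) (ρ : ℝ) (x : Fin K → ℝ) :
    phiAux J ρ (fun k => -(x k)) = phiAux J ρ x := by
  simp [phiAux, abs_neg, neg_mul, mul_neg, neg_neg]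

lemma phiAux_add_le {K : ℕ} (J : Matrix (Fin K) (Fin K) ℝ) {ρ : ℝ} (hρ : 0 ≤ ρ)
    (x y : Fin K → ℝ) :
    phiAux J ρ (fun k => x k + y k) ≤ phiAux J ρ x + phiAux J ρ y := by
  have h1 : ∑ k, |x k + y k| ≤ (∑ k, |x k|) + ∑ k, |y k| := by
    rw [← Finset.sum_add_distrib]
    exact Finset.sum_le_sum fun k _ => abs_add_le _ _
  have h2 : Real.sqrt (∑ k, ∑ k', (x k + y k) * (Jᵀ * J) k k' * (x k' + y k'))
      ≤ Real.sqrt (∑ k, ∑ k', x k * (Jᵀ * J) k k' * x k')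
        + Real.sqrt (∑ k, ∑ k', y k * (Jᵀ * J) k k' * y k') := by
    rw [quad_form_eq, quad_form_eq, quad_form_eq]
    have hexp : ∀ m : Fin K, ∑ k, J m k * (x k + y k)
        = (∑ k, J m k * x k) + ∑ k, J m k * y k := by
      intro m
      rw [← Finset.sum_add_distrib]
      exact Finset.sum_congr rfl fun k _ => by ring
    simp only [hexp]
    have h := norm_add_le (E := EuclideanSpace ℝ (Fin K))
      (WithLp.toLp 2 (fun m => ∑ k, J m k * x k)) (WithLp.toLp 2 (fun m => ∑ k, J m k * y k))
    simp only [EuclideanSpace.norm_eq, Real.norm_eq_abs, sq_abs] at h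
    simpa using h
  have := mul_le_mul_of_nonneg_left h2 hρ
  unfold phiAux
  rw [mul_add] at this
  linarith

lemma phiAux_le_add {K : ℕ} (J : Matrix (Fin K) (Fin K) ℝ) {ρ : ℝ} (hρ : 0 ≤ ρ)
    (x y : Fin K → ℝ) :
    phiAux J ρ x ≤ phiAux J ρ (fun k => x k + y k) + phiAux J ρ y := by
  have h := phiAux_add_le J hρ (fun k => x k + y k) (fun k => -(y k))
  simp only [add_neg_cancel_right] at h
  rw [phiAux_neg] at h
  exact h

/-- Rewriting the penalty as a double sum of `phiAux`. -/
lemma sfp_eq {K p : ℕ} (J : Matrix (Fin K) (Fin K) ℝ) (ρ : ℝ)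
    (L : Fin K → Matrix (Fin p) (Fin p) ℝ) :
    structuredFusionPenalty (Jᵀ * J) ρ L
      = ∑ i : Fin p, ∑ j : Fin p,
          if i ≠ j then phiAux J ρ (fun k => L k i j) else 0 := by
  unfold structuredFusionPenalty phiAux
  rw [Finset.mul_sum, ← Finset.sum_add_distrib]
  refine Finset.sum_congr rfl fun i _ => ?_
  rw [Finset.mul_sum, ← Finset.sum_add_distrib]
  refine Finset.sum_congr rfl fun j _ => ?_
  split <;> simp

/-- Cone membership: if `𝓕` is concave and differentiable at `L*` (with
derivative `G`), `L*` is supported on `S`, the penalized excess objective at `Δ̂` is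
nonpositive, and `|⟨∇𝓕(L*), Δ̂⟩| ≤ (ρₙ/2)(𝒫(Δ̂_S) + 𝒫(Δ̂_{S⊥}))`, then
`𝒫(Δ̂_{S⊥}) ≤ 3 𝒫(Δ̂_S)`. -/
theorem cone_membership (K p : ℕ)
    (J : Matrix (Fin K) (Fin K) ℝ) (ρ : ℝ) (hρ : 0 ≤ ρ)
    (F : (Fin K → Matrix (Fin p) (Fin p) ℝ) → ℝ)
    (G : (Fin K → Matrix (Fin p) (Fin p) ℝ) →L[ℝ] ℝ)
    (Lstar Δhat : Fin K → Matrix (Fin p) (Fin p) ℝ)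
    (Supp : Finset (Fin p × Fin p))
    (hconc : ConcaveOn ℝ (Set.univ : Set (Fin K → Matrix (Fin p) (Fin p) ℝ)) F)
    (hdiff : HasFDerivAt F G Lstar)
    (hsupp : ∀ i j : Fin p, i ≠ j → (i, j) ∉ Supp → ∀ k, Lstar k i j = 0)
    (ρn : ℝ) (hρn : 0 < ρn)
    (ha : -F (Lstar + Δhat) + F Lstar
        + ρn * (structuredFusionPenalty (Jᵀ * J) ρ (Lstar + Δhat)
            - structuredFusionPenalty (Jᵀ * J) ρ Lstar) ≤ 0)
    (hb : |G Δhat| ≤ ρn / 2 * (structuredFusionPenalty (Jᵀ * J) ρ (tupleProjOn Supp Δhat)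
        + structuredFusionPenalty (Jᵀ * J) ρ (tupleProjOffOn Supp Δhat))) :
    structuredFusionPenalty (Jᵀ * J) ρ (tupleProjOffOn Supp Δhat)
      ≤ 3 * structuredFusionPenalty (Jᵀ * J) ρ (tupleProjOn Supp Δhat) := by
  -- Concavity + differentiability gives the gradient bound.
  have hgrad : F (Lstar + Δhat) - F Lstar ≤ G Δhat := by
    set g : ℝ → ℝ := fun t => -F (Lstar + t • Δhat) with hg
    have hgconv : ConvexOn ℝ (Set.univ : Set ℝ) g := by
      have h1 : ConvexOn ℝ (Set.univ : Set (Fin K → Matrix (Fin p) (Fin p) ℝ)) (-F) :=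
        hconc.neg
      have h2 := h1.comp_affineMap (AffineMap.lineMap Lstar (Lstar + Δhat))
      have hpre : (AffineMap.lineMap Lstar (Lstar + Δhat) : ℝ →ᵃ[ℝ] _) ⁻¹' Set.univ
          = Set.univ := by simp
      rw [hpre] at h2
      suffices heq : g = (-F) ∘ ⇑(AffineMap.lineMap Lstar (Lstar + Δhat)) by rw [heq]; exact h2
      funext t
      simp [g, AffineMap.lineMap_apply, add_sub_cancel_left, add_comm]
    have hpath : HasDerivAt (fun t : ℝ => Lstar + t • Δhat) Δhat 0 := by
      have h := ((hasDerivAt_id (0 : ℝ)).smul_const Δhat).const_add Lstar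
      simp only [id, one_smul] at h
      exact h
    have hgF : HasDerivAt (fun t : ℝ => F (Lstar + t • Δhat)) (G Δhat) 0 := by
      have hdiff' : HasFDerivAt F G (Lstar + (0 : ℝ) • Δhat) := by simpa using hdiff
      exact hdiff'.comp_hasDerivAt (0 : ℝ) hpath
    have hgd : HasDerivAt g (-(G Δhat)) 0 := hgF.neg
    have hsl := hgconv.le_slope_of_hasDerivAt (Set.mem_univ (0 : ℝ)) (Set.mem_univ (1 : ℝ))
      one_pos hgd
    have hs : slope g 0 1 = g 1 - g 0 := by simp [slope_def_field]
    rw [hs] at hsl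
    simp only [g, one_smul, zero_smul, add_zero] at hsl
    linarith
  -- Key penalty decomposition inequality.
  have key : structuredFusionPenalty (Jᵀ * J) ρ (tupleProjOffOn Supp Δhat)
        - structuredFusionPenalty (Jᵀ * J) ρ (tupleProjOn Supp Δhat)
      ≤ structuredFusionPenalty (Jᵀ * J) ρ (Lstar + Δhat)
        - structuredFusionPenalty (Jᵀ * J) ρ Lstar := by
    rw [sub_le_sub_iff, sfp_eq, sfp_eq, sfp_eq, sfp_eq,
      ← Finset.sum_add_distrib, ← Finset.sum_add_distrib]
    refine Finset.sum_le_sum fun i _ => ?_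
    rw [← Finset.sum_add_distrib, ← Finset.sum_add_distrib]
    refine Finset.sum_le_sum fun j _ => ?_
    by_cases hij : i ≠ j
    · simp only [if_pos hij]
      by_cases hS : (i, j) ∈ Supp
      · have hO : (fun k => tupleProjOffOn Supp Δhat k i j) = fun _ => (0 : ℝ) :=
          funext fun k => by simp [tupleProjOffOn, hij, hS]
        have hSs : (fun k => tupleProjOn Supp Δhat k i j) = fun k => Δhat k i j :=
          funext fun k => by simp [tupleProjOn, hij, hS]
        have hne : (fun k => (Lstar + Δhat) k i j)
            = fun k => Lstar k i j + Δhat k i j := funext fun k => rfl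
        rw [hO, hSs, hne, phiAux_zero]
        have := phiAux_le_add J hρ (fun k => Lstar k i j) (fun k => Δhat k i j)
        linarith
      · have hO : (fun k => tupleProjOffOn Supp Δhat k i j) = fun k => Δhat k i j :=
          funext fun k => by simp [tupleProjOffOn, hij, hS]
        have hSs : (fun k => tupleProjOn Supp Δhat k i j) = fun _ => (0 : ℝ) :=
          funext fun k => by simp [tupleProjOn, hij, hS]
        have hL : (fun k => Lstar k i j) = fun _ => (0 : ℝ) :=
          funext fun k => hsupp i j hij hS k
        have hne : (fun k => (Lstar + Δhat) k i j) = fun k => Δhat k i j :=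
          funext fun k => by
            show Lstar k i j + Δhat k i j = Δhat k i j
            rw [hsupp i j hij hS k, zero_add]
        rw [hO, hSs, hL, hne, phiAux_zero]
    · simp only [if_neg hij]
      linarith
  -- Combine everything.
  set PS := structuredFusionPenalty (Jᵀ * J) ρ (tupleProjOn Supp Δhat)
  set PO := structuredFusionPenalty (Jᵀ * J) ρ (tupleProjOffOn Supp Δhat)
  have hchain : ρn * (PO - PS) ≤ ρn / 2 * (PS + PO) := by
    have h1 : ρn * (structuredFusionPenalty (Jᵀ * J) ρ (Lstar + Δhat)
        - structuredFusionPenalty (Jᵀ * J) ρ Lstar) ≤ F (Lstar + Δhat) - F Lstar := by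
      linarith
    have h2 : G Δhat ≤ |G Δhat| := le_abs_self _
    have h3 := mul_le_mul_of_nonneg_left key hρn.le
    linarith
  nlinarith [hchain, hρn]
end

section
/- Let V be the real inner product space of K-tuples of p×p real matrices with Frobenius norm ‖Δ‖_F = √(Σ_k ‖Δ_k‖_F²), let 𝓕 : V → ℝ be concave and differentiable at L*, let S be a set of off-diagonal index pairs containing the support of L*, and let ρₙ, c, r, γ > 0. Suppose: (a) restricted strong concavity: −𝓕(L* + Δ) + 𝓕(L*) + ⟨∇𝓕(L*), Δ⟩ ≥ c‖Δ‖_F² for every Δ with ‖Δ‖_F ≤ r; (b) gradient bound: |⟨∇𝓕(L*), Δ⟩| ≤ (ρₙ/2)·(𝒫(Δ_S) + 𝒫(Δ_{S⊥})) for every Δ; (c) compatibility: 𝒫(Δ_S) ≤ γ‖Δ‖_F for every Δ; (d) ε := 3ρₙγ/(2c) ≤ r. Then any Δ̂ with −𝓕(L* + Δ̂) + 𝓕(L*) + ρₙ(𝒫(L* + Δ̂) − 𝒫(L*)) ≤ 0 satisfies ‖Δ̂‖_F ≤ 3ρₙγ/(2c). -/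
open Matrix BigOperators Finset
open Topology Filter

attribute [local instance] Matrix.normedAddCommGroup Matrix.normedSpace

/-- The Frobenius norm of a `K`-tuple of `p × p` matrices,
`‖Δ‖_F = √(Σ_k ‖Δ_k‖_F²)`. -/
noncomputable def tupleFrob {K p : ℕ} (Δ : Fin K → Matrix (Fin p) (Fin p) ℝ) : ℝ :=
  Real.sqrt (∑ k : Fin K, ∑ i : Fin p, ∑ j : Fin p, (Δ k i j) ^ 2)

namespace SFPAux

variable {K p : ℕ}

noncomputable def phiJ (J : Matrix (Fin K) (Fin K) ℝ) (ρ : ℝ) (v : Fin K → ℝ) : ℝ :=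
  (∑ k, |v k|) + ρ * Real.sqrt (∑ m, (∑ k, J m k * v k) ^ 2)

lemma quad_eq (J : Matrix (Fin K) (Fin K) ℝ) (v : Fin K → ℝ) :
    ∑ k, ∑ k', v k * (Jᵀ * J) k k' * v k' = ∑ m, (∑ k, J m k * v k) ^ 2 := by
  simp only [Matrix.mul_apply, Matrix.transpose_apply]
  calc ∑ k, ∑ k', v k * (∑ m, J m k * J m k') * v k'
      = ∑ k, ∑ k', ∑ m, (J m k * v k) * (J m k' * v k') := by
        refine Finset.sum_congr rfl fun k _ => Finset.sum_congr rfl fun k' _ => ?_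
        rw [Finset.mul_sum, Finset.sum_mul]
        exact Finset.sum_congr rfl fun m _ => by ring
    _ = ∑ k, ∑ m, ∑ k', (J m k * v k) * (J m k' * v k') :=
        Finset.sum_congr rfl fun k _ => Finset.sum_comm
    _ = ∑ m, ∑ k, ∑ k', (J m k * v k) * (J m k' * v k') := Finset.sum_comm
    _ = ∑ m, (∑ k, J m k * v k) ^ 2 := by
        refine Finset.sum_congr rfl fun m _ => ?_
        rw [sq, Finset.sum_mul_sum]

lemma phiJ_nonneg (J : Matrix (Fin K) (Fin K) ℝ) {ρ : ℝ} (hρ : 0 ≤ ρ) (v : Fin K → ℝ) :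
    0 ≤ phiJ J ρ v :=
  add_nonneg (Finset.sum_nonneg fun _ _ => abs_nonneg _)
    (mul_nonneg hρ (Real.sqrt_nonneg _))

lemma phiJ_zero (J : Matrix (Fin K) (Fin K) ℝ) (ρ : ℝ) :
    phiJ J ρ (fun _ => 0) = 0 := by simp [phiJ]

lemma sqrt_tri (f g : Fin K → ℝ) :
    Real.sqrt (∑ m, (f m + g m) ^ 2)
      ≤ Real.sqrt (∑ m, f m ^ 2) + Real.sqrt (∑ m, g m ^ 2) := by
  have hA : (0:ℝ) ≤ ∑ m, f m ^ 2 := Finset.sum_nonneg fun _ _ => sq_nonneg _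
  have hB : (0:ℝ) ≤ ∑ m, g m ^ 2 := Finset.sum_nonneg fun _ _ => sq_nonneg _
  have hcs := Real.sum_mul_le_sqrt_mul_sqrt Finset.univ f g
  have h1 : ∑ m, (f m + g m) ^ 2
      ≤ (Real.sqrt (∑ m, f m ^ 2) + Real.sqrt (∑ m, g m ^ 2)) ^ 2 := by
    have e1 : ∑ m, (f m + g m) ^ 2 = (∑ m, f m ^ 2) + 2 * (∑ m, f m * g m) + ∑ m, g m ^ 2 := by
      rw [Finset.mul_sum, ← Finset.sum_add_distrib, ← Finset.sum_add_distrib]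
      exact Finset.sum_congr rfl fun m _ => by ring
    nlinarith [hcs, Real.sq_sqrt hA, Real.sq_sqrt hB, Real.sqrt_nonneg (∑ m, f m ^ 2),
      Real.sqrt_nonneg (∑ m, g m ^ 2)]
  calc Real.sqrt (∑ m, (f m + g m) ^ 2)
      ≤ Real.sqrt ((Real.sqrt (∑ m, f m ^ 2) + Real.sqrt (∑ m, g m ^ 2)) ^ 2) :=
        Real.sqrt_le_sqrt h1
    _ = _ := Real.sqrt_sq (by positivity)

lemma phiJ_add_le (J : Matrix (Fin K) (Fin K) ℝ) {ρ : ℝ} (hρ : 0 ≤ ρ) (v w : Fin K → ℝ) :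
    phiJ J ρ (fun k => v k + w k) ≤ phiJ J ρ v + phiJ J ρ w := by
  unfold phiJ
  have h1 : ∑ k, |v k + w k| ≤ (∑ k, |v k|) + ∑ k, |w k| := by
    rw [← Finset.sum_add_distrib]
    exact Finset.sum_le_sum fun k _ => abs_add_le _ _
  have h2 : Real.sqrt (∑ m, (∑ k, J m k * (v k + w k)) ^ 2)
      ≤ Real.sqrt (∑ m, (∑ k, J m k * v k) ^ 2) + Real.sqrt (∑ m, (∑ k, J m k * w k) ^ 2) := by
    have e : ∀ m, ∑ k, J m k * (v k + w k) = (∑ k, J m k * v k) + (∑ k, J m k * w k) := by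
      intro m
      rw [← Finset.sum_add_distrib]
      exact Finset.sum_congr rfl fun k _ => by ring
    simp_rw [e]
    exact sqrt_tri _ _
  have h3 := mul_le_mul_of_nonneg_left h2 hρ
  linarith

lemma phiJ_smul (J : Matrix (Fin K) (Fin K) ℝ) (ρ : ℝ) {t : ℝ} (ht : 0 ≤ t) (v : Fin K → ℝ) :
    phiJ J ρ (fun k => t * v k) = t * phiJ J ρ v := by
  unfold phiJ
  have h1 : ∑ k, |t * v k| = t * ∑ k, |v k| := by
    rw [Finset.mul_sum]
    exact Finset.sum_congr rfl fun k _ => by rw [abs_mul, abs_of_nonneg ht]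
  have h2 : Real.sqrt (∑ m, (∑ k, J m k * (t * v k)) ^ 2)
      = t * Real.sqrt (∑ m, (∑ k, J m k * v k) ^ 2) := by
    have e : ∀ m, (∑ k, J m k * (t * v k)) ^ 2 = t ^ 2 * (∑ k, J m k * v k) ^ 2 := by
      intro m
      have : ∑ k, J m k * (t * v k) = t * ∑ k, J m k * v k := by
        rw [Finset.mul_sum]
        exact Finset.sum_congr rfl fun k _ => by ring
      rw [this, mul_pow]
    simp_rw [e]
    rw [← Finset.mul_sum, Real.sqrt_mul (sq_nonneg t), Real.sqrt_sq_eq_abs, abs_of_nonneg ht]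
  rw [h1, h2]; ring

lemma phiJ_neg (J : Matrix (Fin K) (Fin K) ℝ) (ρ : ℝ) (v : Fin K → ℝ) :
    phiJ J ρ (fun k => -v k) = phiJ J ρ v := by
  unfold phiJ
  simp only [abs_neg, mul_neg, Finset.sum_neg_distrib, neg_sq]

lemma phiJ_rev (J : Matrix (Fin K) (Fin K) ℝ) {ρ : ℝ} (hρ : 0 ≤ ρ) (a b : Fin K → ℝ) :
    phiJ J ρ a ≤ phiJ J ρ (fun k => a k + b k) + phiJ J ρ b := by
  have h := phiJ_add_le J hρ (fun k => a k + b k) (fun k => -b k)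
  have e : (fun k => (a k + b k) + -b k) = a := by funext k; ring
  rw [e, phiJ_neg] at h
  exact h

lemma pen_eq (J : Matrix (Fin K) (Fin K) ℝ) (ρ : ℝ) (L : Fin K → Matrix (Fin p) (Fin p) ℝ) :
    structuredFusionPenalty (Jᵀ * J) ρ L
      = ∑ i : Fin p, ∑ j : Fin p, if i ≠ j then phiJ J ρ (fun k => L k i j) else 0 := by
  unfold structuredFusionPenalty
  rw [Finset.mul_sum, ← Finset.sum_add_distrib]
  refine Finset.sum_congr rfl fun i _ => ?_
  rw [Finset.mul_sum, ← Finset.sum_add_distrib]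
  refine Finset.sum_congr rfl fun j _ => ?_
  by_cases hij : i ≠ j
  · rw [if_pos hij, if_pos hij, if_pos hij, phiJ, quad_eq]
  · rw [if_neg hij, if_neg hij, if_neg hij, mul_zero, add_zero]

lemma pen_nonneg (J : Matrix (Fin K) (Fin K) ℝ) {ρ : ℝ} (hρ : 0 ≤ ρ)
    (L : Fin K → Matrix (Fin p) (Fin p) ℝ) :
    0 ≤ structuredFusionPenalty (Jᵀ * J) ρ L := by
  rw [pen_eq]
  refine Finset.sum_nonneg fun i _ => Finset.sum_nonneg fun j _ => ?_
  split_ifs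
  · exact phiJ_nonneg J hρ _
  · exact le_refl 0

lemma pen_add_le (J : Matrix (Fin K) (Fin K) ℝ) {ρ : ℝ} (hρ : 0 ≤ ρ)
    (X Y : Fin K → Matrix (Fin p) (Fin p) ℝ) :
    structuredFusionPenalty (Jᵀ * J) ρ (X + Y)
      ≤ structuredFusionPenalty (Jᵀ * J) ρ X + structuredFusionPenalty (Jᵀ * J) ρ Y := by
  rw [pen_eq, pen_eq, pen_eq, ← Finset.sum_add_distrib]
  refine Finset.sum_le_sum fun i _ => ?_
  rw [← Finset.sum_add_distrib]
  refine Finset.sum_le_sum fun j _ => ?_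
  split_ifs with hij
  · have e : (fun k => (X + Y) k i j) = fun k => X k i j + Y k i j := rfl
    rw [e]
    exact phiJ_add_le J hρ _ _
  · simp

lemma pen_smul (J : Matrix (Fin K) (Fin K) ℝ) (ρ : ℝ) {t : ℝ} (ht : 0 ≤ t)
    (X : Fin K → Matrix (Fin p) (Fin p) ℝ) :
    structuredFusionPenalty (Jᵀ * J) ρ (t • X) = t * structuredFusionPenalty (Jᵀ * J) ρ X := by
  rw [pen_eq, pen_eq, Finset.mul_sum]
  refine Finset.sum_congr rfl fun i _ => ?_
  rw [Finset.mul_sum]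
  refine Finset.sum_congr rfl fun j _ => ?_
  split_ifs with hij
  · have e : (fun k => (t • X) k i j) = fun k => t * X k i j := rfl
    rw [e]
    exact phiJ_smul J ρ ht _
  · simp

lemma projOn_smul (S : Finset (Fin p × Fin p)) (t : ℝ) (Δ : Fin K → Matrix (Fin p) (Fin p) ℝ) :
    tupleProjOn S (t • Δ) = t • tupleProjOn S Δ := by
  funext k
  ext i j
  simp only [tupleProjOn, Matrix.of_apply, Pi.smul_apply, Matrix.smul_apply, smul_eq_mul]
  split_ifs
  · rfl
  · rw [mul_zero]

lemma projOffOn_smul (S : Finset (Fin p × Fin p)) (t : ℝ) (Δ : Fin K → Matrix (Fin p) (Fin p) ℝ) :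
    tupleProjOffOn S (t • Δ) = t • tupleProjOffOn S Δ := by
  funext k
  ext i j
  simp only [tupleProjOffOn, Matrix.of_apply, Pi.smul_apply, Matrix.smul_apply, smul_eq_mul]
  split_ifs
  · rfl
  · rw [mul_zero]

lemma pen_decomp (J : Matrix (Fin K) (Fin K) ℝ) {ρ : ℝ} (hρ : 0 ≤ ρ)
    (S : Finset (Fin p × Fin p)) (Lstar Δ : Fin K → Matrix (Fin p) (Fin p) ℝ)
    (hsupp : ∀ i j : Fin p, i ≠ j → (i, j) ∉ S → ∀ k, Lstar k i j = 0) :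
    structuredFusionPenalty (Jᵀ * J) ρ Lstar
      - structuredFusionPenalty (Jᵀ * J) ρ (tupleProjOn S Δ)
      + structuredFusionPenalty (Jᵀ * J) ρ (tupleProjOffOn S Δ)
      ≤ structuredFusionPenalty (Jᵀ * J) ρ (Lstar + Δ) := by
  rw [pen_eq, pen_eq, pen_eq, pen_eq, ← Finset.sum_sub_distrib, ← Finset.sum_add_distrib]
  refine Finset.sum_le_sum fun i _ => ?_
  rw [← Finset.sum_sub_distrib, ← Finset.sum_add_distrib]
  refine Finset.sum_le_sum fun j _ => ?_
  by_cases hij : i ≠ j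
  · simp only [if_pos hij]
    have eadd : (fun k => (Lstar + Δ) k i j) = fun k => Lstar k i j + Δ k i j := rfl
    by_cases hmem : (i, j) ∈ S
    · have e1 : (fun k => tupleProjOn S Δ k i j) = fun k => Δ k i j := by
        funext k; simp [tupleProjOn, hij, hmem]
      have e2 : (fun k => tupleProjOffOn S Δ k i j) = fun _ => (0:ℝ) := by
        funext k; simp [tupleProjOffOn, hmem]
      rw [eadd, e1, e2, phiJ_zero, add_zero]
      have := phiJ_rev J hρ (fun k => Lstar k i j) (fun k => Δ k i j)
      linarith
    · have e1 : (fun k => tupleProjOn S Δ k i j) = fun _ => (0:ℝ) := by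
        funext k; simp [tupleProjOn, hmem]
      have e2 : (fun k => tupleProjOffOn S Δ k i j) = fun k => Δ k i j := by
        funext k; simp [tupleProjOffOn, hij, hmem]
      have e3 : (fun k => Lstar k i j) = fun _ => (0:ℝ) := by
        funext k; simp [hsupp i j hij hmem k]
      have e4 : (fun k => (Lstar + Δ) k i j) = fun k => Δ k i j := by
        funext k
        have : (Lstar + Δ) k i j = Lstar k i j + Δ k i j := rfl
        rw [this, hsupp i j hij hmem k, zero_add]
      rw [e1, e2, e3, e4, phiJ_zero]
      linarith
  · simp [hij]

lemma frob_nonneg (Δ : Fin K → Matrix (Fin p) (Fin p) ℝ) : 0 ≤ tupleFrob Δ :=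
  Real.sqrt_nonneg _

lemma frob_smul {t : ℝ} (ht : 0 ≤ t) (Δ : Fin K → Matrix (Fin p) (Fin p) ℝ) :
    tupleFrob (t • Δ) = t * tupleFrob Δ := by
  unfold tupleFrob
  have e : ∑ k : Fin K, ∑ i : Fin p, ∑ j : Fin p, ((t • Δ) k i j) ^ 2
      = t ^ 2 * ∑ k : Fin K, ∑ i : Fin p, ∑ j : Fin p, (Δ k i j) ^ 2 := by
    rw [Finset.mul_sum]
    refine Finset.sum_congr rfl fun k _ => ?_
    rw [Finset.mul_sum]
    refine Finset.sum_congr rfl fun i _ => ?_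
    rw [Finset.mul_sum]
    refine Finset.sum_congr rfl fun j _ => ?_
    have : (t • Δ) k i j = t * Δ k i j := rfl
    rw [this, mul_pow]
  rw [e, Real.sqrt_mul (sq_nonneg t), Real.sqrt_sq_eq_abs, abs_of_nonneg ht]

end SFPAux

/-- Deterministic estimation-error bound: under restricted strong
concavity (a), the gradient bound (b), the compatibility condition (c), and
`3ρₙγ/(2c) ≤ r` (d), any `Δ̂` at which the penalized excess objective is nonpositive
satisfies `‖Δ̂‖_F ≤ 3ρₙγ/(2c)`. -/
theorem deterministic_error_bound (K p : ℕ)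
    (J : Matrix (Fin K) (Fin K) ℝ) (ρ : ℝ) (hρ : 0 ≤ ρ)
    (F : (Fin K → Matrix (Fin p) (Fin p) ℝ) → ℝ)
    (G : (Fin K → Matrix (Fin p) (Fin p) ℝ) →L[ℝ] ℝ)
    (Lstar : Fin K → Matrix (Fin p) (Fin p) ℝ)
    (Supp : Finset (Fin p × Fin p))
    (hconc : ConcaveOn ℝ (Set.univ : Set (Fin K → Matrix (Fin p) (Fin p) ℝ)) F)
    (hdiff : HasFDerivAt F G Lstar)
    (hsupp : ∀ i j : Fin p, i ≠ j → (i, j) ∉ Supp → ∀ k, Lstar k i j = 0)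
    (ρn c r γ : ℝ) (hρn : 0 < ρn) (hc : 0 < c) (hr : 0 < r) (hγ : 0 < γ)
    (ha : ∀ Δ : Fin K → Matrix (Fin p) (Fin p) ℝ, tupleFrob Δ ≤ r →
        c * (tupleFrob Δ) ^ 2 ≤ -F (Lstar + Δ) + F Lstar + G Δ)
    (hb : ∀ Δ : Fin K → Matrix (Fin p) (Fin p) ℝ,
        |G Δ| ≤ ρn / 2 * (structuredFusionPenalty (Jᵀ * J) ρ (tupleProjOn Supp Δ)
          + structuredFusionPenalty (Jᵀ * J) ρ (tupleProjOffOn Supp Δ)))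
    (hcomp : ∀ Δ : Fin K → Matrix (Fin p) (Fin p) ℝ,
        structuredFusionPenalty (Jᵀ * J) ρ (tupleProjOn Supp Δ) ≤ γ * tupleFrob Δ)
    (hd : 3 * ρn * γ / (2 * c) ≤ r)
    (Δhat : Fin K → Matrix (Fin p) (Fin p) ℝ)
    (hopt : -F (Lstar + Δhat) + F Lstar
        + ρn * (structuredFusionPenalty (Jᵀ * J) ρ (Lstar + Δhat)
            - structuredFusionPenalty (Jᵀ * J) ρ Lstar) ≤ 0) :
    tupleFrob Δhat ≤ 3 * ρn * γ / (2 * c) := by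
  classical
  by_contra hcon
  push_neg at hcon
  have heps : 0 < 3 * ρn * γ / (2 * c) := by positivity
  have hs0pos : 0 < tupleFrob Δhat := lt_trans heps hcon
  have hPOn : 0 ≤ structuredFusionPenalty (Jᵀ * J) ρ (tupleProjOffOn Supp Δhat) := SFPAux.pen_nonneg J hρ _
  have hPSle : structuredFusionPenalty (Jᵀ * J) ρ (tupleProjOn Supp Δhat) ≤ γ * tupleFrob Δhat := hcomp Δhat
  have hGb : |G Δhat| ≤ ρn / 2 * (structuredFusionPenalty (Jᵀ * J) ρ (tupleProjOn Supp Δhat) + structuredFusionPenalty (Jᵀ * J) ρ (tupleProjOffOn Supp Δhat)) := hb Δhat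
  have hdec1 : structuredFusionPenalty (Jᵀ * J) ρ Lstar - structuredFusionPenalty (Jᵀ * J) ρ (tupleProjOn Supp Δhat) + structuredFusionPenalty (Jᵀ * J) ρ (tupleProjOffOn Supp Δhat) ≤ structuredFusionPenalty (Jᵀ * J) ρ (Lstar + Δhat) :=
    SFPAux.pen_decomp J hρ Supp Lstar Δhat hsupp
  have hcomb : ∀ (t₁ t₂ b : ℝ), Lstar + ((1 - b) * t₁ + b * t₂) • Δhat
      = (1 - b) • (Lstar + t₁ • Δhat) + b • (Lstar + t₂ • Δhat) := by
    intro t₁ t₂ b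
    module
  have hFc : ∀ (t₁ t₂ b : ℝ), 0 ≤ b → b ≤ 1 →
      (1 - b) * F (Lstar + t₁ • Δhat) + b * F (Lstar + t₂ • Δhat)
        ≤ F (Lstar + ((1 - b) * t₁ + b * t₂) • Δhat) := by
    intro t₁ t₂ b hb0 hb1
    have h := hconc.2 (Set.mem_univ (Lstar + t₁ • Δhat)) (Set.mem_univ (Lstar + t₂ • Δhat))
      (by linarith : (0:ℝ) ≤ 1 - b) hb0 (by ring)
    rw [hcomb]
    simpa [smul_eq_mul] using h
  have hPc : ∀ (t₁ t₂ b : ℝ), 0 ≤ b → b ≤ 1 →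
      structuredFusionPenalty (Jᵀ * J) ρ (Lstar + ((1 - b) * t₁ + b * t₂) • Δhat)
        ≤ (1 - b) * structuredFusionPenalty (Jᵀ * J) ρ (Lstar + t₁ • Δhat) + b * structuredFusionPenalty (Jᵀ * J) ρ (Lstar + t₂ • Δhat) := by
    intro t₁ t₂ b hb0 hb1
    rw [hcomb]
    calc structuredFusionPenalty (Jᵀ * J) ρ ((1 - b) • (Lstar + t₁ • Δhat) + b • (Lstar + t₂ • Δhat))
        ≤ structuredFusionPenalty (Jᵀ * J) ρ ((1 - b) • (Lstar + t₁ • Δhat)) + structuredFusionPenalty (Jᵀ * J) ρ (b • (Lstar + t₂ • Δhat)) :=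
          SFPAux.pen_add_le J hρ _ _
      _ = _ := by
          rw [SFPAux.pen_smul J ρ (by linarith : (0:ℝ) ≤ 1 - b),
            SFPAux.pen_smul J ρ hb0]
  set hfun : ℝ → ℝ := fun t => -F (Lstar + t • Δhat) + F Lstar
      + ρn * (structuredFusionPenalty (Jᵀ * J) ρ (Lstar + t • Δhat) - structuredFusionPenalty (Jᵀ * J) ρ Lstar) with hfundef
  have hh0 : hfun 0 = 0 := by simp [hfundef]
  have hh1 : hfun 1 ≤ 0 := by
    simp only [hfundef, one_smul]
    exact hopt
  have hhconv : ∀ (t₁ t₂ b : ℝ), 0 ≤ b → b ≤ 1 →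
      hfun ((1 - b) * t₁ + b * t₂) ≤ (1 - b) * hfun t₁ + b * hfun t₂ := by
    intro t₁ t₂ b hb0 hb1
    have h1 := hFc t₁ t₂ b hb0 hb1
    have h2 := mul_le_mul_of_nonneg_left (hPc t₁ t₂ b hb0 hb1) hρn.le
    simp only [hfundef]
    linarith only [h1, h2]
  have hlow : ∀ t : ℝ, 0 ≤ t → t * tupleFrob Δhat ≤ r →
      c * (t * tupleFrob Δhat) ^ 2 ≤ t * G Δhat + (F Lstar - F (Lstar + t • Δhat)) := by
    intro t ht htr
    have h1 := ha (t • Δhat) (by rwa [SFPAux.frob_smul ht])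
    rw [SFPAux.frob_smul ht, _root_.map_smul, smul_eq_mul] at h1
    linarith
  have hdect : ∀ t : ℝ, 0 ≤ t →
      structuredFusionPenalty (Jᵀ * J) ρ Lstar - t * structuredFusionPenalty (Jᵀ * J) ρ (tupleProjOn Supp Δhat) + t * structuredFusionPenalty (Jᵀ * J) ρ (tupleProjOffOn Supp Δhat) ≤ structuredFusionPenalty (Jᵀ * J) ρ (Lstar + t • Δhat) := by
    intro t ht
    have h1 := SFPAux.pen_decomp J hρ Supp Lstar (t • Δhat) hsupp
    rw [SFPAux.projOn_smul, SFPAux.projOffOn_smul, SFPAux.pen_smul J ρ ht,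
      SFPAux.pen_smul J ρ ht] at h1
    linarith
  have master : ∀ t : ℝ, 0 < t → t ≤ 1 → t * tupleFrob Δhat ≤ r →
      c * t * tupleFrob Δhat ^ 2 ≤ 3 * ρn / 2 * (γ * tupleFrob Δhat) := by
    intro t ht0 ht1 htr
    have h1 := hlow t ht0.le htr
    have h2 : F Lstar - F (Lstar + t • Δhat) ≤ t * (F Lstar - F (Lstar + Δhat)) := by
      have h3 := hFc 0 1 t ht0.le ht1
      have e : (1 - t) * 0 + t * 1 = t := by ring
      rw [e] at h3
      simp only [zero_smul, add_zero, one_smul] at h3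
      linarith only [h3]
    have h4 : F Lstar - F (Lstar + Δhat) ≤ ρn * (structuredFusionPenalty (Jᵀ * J) ρ (tupleProjOn Supp Δhat) - structuredFusionPenalty (Jᵀ * J) ρ (tupleProjOffOn Supp Δhat)) := by
      have h5 : structuredFusionPenalty (Jᵀ * J) ρ Lstar - structuredFusionPenalty (Jᵀ * J) ρ (Lstar + Δhat) ≤ structuredFusionPenalty (Jᵀ * J) ρ (tupleProjOn Supp Δhat) - structuredFusionPenalty (Jᵀ * J) ρ (tupleProjOffOn Supp Δhat) := by linarith
      have h6 := mul_le_mul_of_nonneg_left h5 hρn.le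
      linarith
    have h5 : t * G Δhat ≤ t * (ρn / 2 * (structuredFusionPenalty (Jᵀ * J) ρ (tupleProjOn Supp Δhat) + structuredFusionPenalty (Jᵀ * J) ρ (tupleProjOffOn Supp Δhat))) :=
      mul_le_mul_of_nonneg_left ((le_abs_self _).trans hGb) ht0.le
    have h7 : F Lstar - F (Lstar + t • Δhat) ≤ t * (ρn * (structuredFusionPenalty (Jᵀ * J) ρ (tupleProjOn Supp Δhat) - structuredFusionPenalty (Jᵀ * J) ρ (tupleProjOffOn Supp Δhat))) :=
      h2.trans (mul_le_mul_of_nonneg_left h4 ht0.le)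
    have h8 : t * structuredFusionPenalty (Jᵀ * J) ρ (tupleProjOn Supp Δhat) ≤ t * (γ * tupleFrob Δhat) := mul_le_mul_of_nonneg_left hPSle ht0.le
    have h9 : 0 ≤ t * structuredFusionPenalty (Jᵀ * J) ρ (tupleProjOffOn Supp Δhat) := mul_nonneg ht0.le hPOn
    have h8' := mul_le_mul_of_nonneg_left h8 (by positivity : (0:ℝ) ≤ 3 * ρn / 2)
    have h9' : 0 ≤ ρn / 2 * (t * structuredFusionPenalty (Jᵀ * J) ρ (tupleProjOffOn Supp Δhat)) :=
      mul_nonneg (by positivity) h9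
    have hfin : c * (t * tupleFrob Δhat) ^ 2 ≤ t * (3 * ρn / 2 * (γ * tupleFrob Δhat)) := by
      linarith only [h1, h5, h7, h8', h9']
    have hfin2 : t * (c * t * tupleFrob Δhat ^ 2) ≤ t * (3 * ρn / 2 * (γ * tupleFrob Δhat)) := by
      linarith only [hfin]
    exact le_of_mul_le_mul_left hfin2 ht0
  by_cases hsr : tupleFrob Δhat ≤ r
  · have h1 := master 1 one_pos le_rfl (by simpa using hsr)
    have h2 : c * tupleFrob Δhat ≤ 3 * ρn * γ / 2 := by
      have h3 : c * tupleFrob Δhat * tupleFrob Δhat ≤ 3 * ρn * γ / 2 * tupleFrob Δhat := by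
        linarith only [h1]
      exact le_of_mul_le_mul_right h3 hs0pos
    rw [div_lt_iff₀ (by positivity : (0:ℝ) < 2 * c)] at hcon
    linarith only [h2, hcon]
  · push_neg at hsr
    set ts : ℝ := r / tupleFrob Δhat with htsdef
    have hts0 : 0 < ts := div_pos hr hs0pos
    have hts1 : ts < 1 := (div_lt_one hs0pos).2 hsr
    have htss : ts * tupleFrob Δhat = r := div_mul_cancel₀ r (ne_of_gt hs0pos)
    have h1 := master ts hts0 hts1.le (le_of_eq htss)
    have hcr : 2 * c * r = 3 * ρn * γ := by
      have e : c * r * tupleFrob Δhat = c * ts * tupleFrob Δhat ^ 2 := by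
        rw [← htss]; ring
      have h2 : c * r * tupleFrob Δhat ≤ 3 * ρn / 2 * (γ * tupleFrob Δhat) := by
        rw [e]; exact h1
      have h3 : c * r ≤ 3 * ρn / 2 * γ := by
        refine le_of_mul_le_mul_right ?_ hs0pos
        linarith only [h2]
      rw [div_le_iff₀ (by positivity : (0:ℝ) < 2 * c)] at hd
      linarith
    -- h t* ≥ 0
    have e1 := hlow ts hts0.le (le_of_eq htss)
    have e2 : ts * G Δhat ≤ ts * (ρn / 2 * (structuredFusionPenalty (Jᵀ * J) ρ (tupleProjOn Supp Δhat) + structuredFusionPenalty (Jᵀ * J) ρ (tupleProjOffOn Supp Δhat))) :=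
      mul_le_mul_of_nonneg_left ((le_abs_self _).trans hGb) hts0.le
    have e3 : ρn * (ts * structuredFusionPenalty (Jᵀ * J) ρ (tupleProjOffOn Supp Δhat) - ts * structuredFusionPenalty (Jᵀ * J) ρ (tupleProjOn Supp Δhat)) ≤ ρn * (structuredFusionPenalty (Jᵀ * J) ρ (Lstar + ts • Δhat) - structuredFusionPenalty (Jᵀ * J) ρ Lstar) := by
      exact mul_le_mul_of_nonneg_left (by linarith [hdect ts hts0.le]) hρn.le
    have e4 : 3 * ρn / 2 * (ts * structuredFusionPenalty (Jᵀ * J) ρ (tupleProjOn Supp Δhat)) ≤ 3 * ρn / 2 * (ts * (γ * tupleFrob Δhat)) :=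
      mul_le_mul_of_nonneg_left (mul_le_mul_of_nonneg_left hPSle hts0.le) (by positivity)
    have e5 : 0 ≤ ρn / 2 * (ts * structuredFusionPenalty (Jᵀ * J) ρ (tupleProjOffOn Supp Δhat)) := by positivity
    have e6 : c * (ts * tupleFrob Δhat) ^ 2 = c * r ^ 2 := by rw [htss]
    have e7 : 3 * ρn / 2 * (ts * (γ * tupleFrob Δhat)) = c * r ^ 2 := by
      have e : ts * (γ * tupleFrob Δhat) = γ * r := by rw [← htss]; ring
      rw [e]
      linear_combination (-r / 2) * hcr
    have hhts : 0 ≤ hfun ts := by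
      simp only [hfundef]
      linarith only [e1, e2, e3, e4, e5, e6, e7]
    have hhts2 : hfun ts ≤ ts * hfun 1 := by
      have h2 := hhconv 0 1 ts hts0.le hts1.le
      have e : (1 - ts) * 0 + ts * 1 = ts := by ring
      rw [e, hh0] at h2
      linarith
    have hh1np : ts * hfun 1 ≤ 0 := mul_nonpos_of_nonneg_of_nonpos hts0.le hh1
    have hhtseq : hfun ts = 0 := le_antisymm (hhts2.trans hh1np) hhts
    have hh1ge : 0 ≤ hfun 1 := by
      by_contra hneg
      push_neg at hneg
      have h2 := hhts2
      rw [hhtseq] at h2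
      have := mul_neg_of_pos_of_neg hts0 hneg
      linarith
    have hh1eq : hfun 1 = 0 := le_antisymm hh1 hh1ge
    have hzero : ∀ t : ℝ, 0 < t → t ≤ ts → hfun t = 0 := by
      intro t ht0 htle
      have hθ1 : t / ts ≤ 1 := (div_le_one hts0).2 htle
      have hθ0 : 0 ≤ t / ts := div_nonneg ht0.le hts0.le
      have hupper : hfun t ≤ 0 := by
        have h2 := hhconv 0 ts (t / ts) hθ0 hθ1
        have e : (1 - t / ts) * 0 + t / ts * ts = t := by
          rw [mul_zero, zero_add, div_mul_cancel₀ t (ne_of_gt hts0)]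
        rw [e, hh0, hhtseq] at h2
        simpa using h2
      have ht1 : t < 1 := lt_of_le_of_lt htle hts1
      have h1mt : (0:ℝ) < 1 - t := by linarith
      set b : ℝ := (ts - t) / (1 - t) with hbdef
      have hb0 : 0 ≤ b := div_nonneg (by linarith) h1mt.le
      have hb1 : b < 1 := by rw [hbdef, div_lt_one h1mt]; linarith
      have h2 := hhconv t 1 b hb0 hb1.le
      have e : (1 - b) * t + b * 1 = ts := by
        rw [hbdef]
        field_simp
        ring
      rw [e, hh1eq, hhtseq, mul_zero, add_zero] at h2
      have hlower : 0 ≤ hfun t := by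
        have h3 : (1 - b) * 0 ≤ (1 - b) * hfun t := by linarith
        exact le_of_mul_le_mul_left h3 (by linarith)
      exact le_antisymm hupper hlower

    have hAt : ∀ t : ℝ, 0 < t → t ≤ ts →
        F Lstar - F (Lstar + t • Δhat)
          = t / ts * (F Lstar - F (Lstar + ts • Δhat)) := by
      intro t ht0 htle
      have hθ1 : t / ts ≤ 1 := (div_le_one hts0).2 htle
      have hθ0 : 0 ≤ t / ts := div_nonneg ht0.le hts0.le
      have escal : (1 - t / ts) * 0 + t / ts * ts = t := by
        rw [mul_zero, zero_add, div_mul_cancel₀ t (ne_of_gt hts0)]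
      have hup : F Lstar - F (Lstar + t • Δhat)
          ≤ t / ts * (F Lstar - F (Lstar + ts • Δhat)) := by
        have h2 := hFc 0 ts (t / ts) hθ0 hθ1
        rw [escal] at h2
        simp only [zero_smul, add_zero] at h2
        linarith only [h2]
      have hz1 : hfun t = 0 := hzero t ht0 htle
      have hz2 : hfun ts = 0 := hhtseq
      simp only [hfundef] at hz1 hz2
      have ea : F Lstar - F (Lstar + t • Δhat)
          = ρn * (structuredFusionPenalty (Jᵀ * J) ρ Lstar
              - structuredFusionPenalty (Jᵀ * J) ρ (Lstar + t • Δhat)) := by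
        linarith only [hz1]
      have eb : F Lstar - F (Lstar + ts • Δhat)
          = ρn * (structuredFusionPenalty (Jᵀ * J) ρ Lstar
              - structuredFusionPenalty (Jᵀ * J) ρ (Lstar + ts • Δhat)) := by
        linarith only [hz2]
      have hlo : t / ts * (F Lstar - F (Lstar + ts • Δhat))
          ≤ F Lstar - F (Lstar + t • Δhat) := by
        have h2 := hPc 0 ts (t / ts) hθ0 hθ1
        rw [escal] at h2
        simp only [zero_smul, add_zero] at h2
        have h3 := mul_le_mul_of_nonneg_left h2 hρn.le
        rw [ea, eb]
        linarith only [h3]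
      linarith only [hup, hlo]
    have hts_ne : ts ≠ 0 := ne_of_gt hts0
    have hDer : HasDerivAt (fun t : ℝ => F (Lstar + t • Δhat)) (G Δhat) 0 := by
      have hline : HasDerivAt (fun t : ℝ => Lstar + t • Δhat) Δhat 0 := by
        have h := ((hasDerivAt_id (0:ℝ)).smul_const Δhat).const_add Lstar
        rw [one_smul] at h
        exact h
      have hFd : HasFDerivAt F G (Lstar + (0:ℝ) • Δhat) := by
        simpa using hdiff
      exact hFd.comp_hasDerivAt 0 hline
    rw [hasDerivAt_iff_tendsto_slope] at hDer
    have hsub : (𝓝[>] (0:ℝ)) ≤ 𝓝[≠] (0:ℝ) :=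
      nhdsWithin_mono 0 fun x hx => ne_of_gt hx
    have hDer2 : Filter.Tendsto (slope (fun t : ℝ => F (Lstar + t • Δhat)) 0)
        (𝓝[>] (0:ℝ)) (𝓝 (G Δhat)) := hDer.mono_left hsub
    have hev : slope (fun t : ℝ => F (Lstar + t • Δhat)) 0
        =ᶠ[𝓝[>] (0:ℝ)]
          fun _ => -((F Lstar - F (Lstar + ts • Δhat)) / ts) := by
      filter_upwards [Ioo_mem_nhdsGT_of_mem (Set.mem_Ico.2 ⟨le_refl (0:ℝ), hts0⟩)] with z hz
      have h1 := hAt z hz.1 hz.2.le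
      rw [slope_def_field]
      simp only [zero_smul, add_zero, sub_zero]
      have e2 : F (Lstar + z • Δhat) - F Lstar
          = -(z / ts * (F Lstar - F (Lstar + ts • Δhat))) := by linarith only [h1]
      rw [e2]
      have hz0 : z ≠ 0 := ne_of_gt hz.1
      field_simp
    have hGval : G Δhat = -((F Lstar - F (Lstar + ts • Δhat)) / ts) :=
      tendsto_nhds_unique (hDer2.congr' hev) tendsto_const_nhds
    have hfin := hlow ts hts0.le (le_of_eq htss)
    rw [htss, hGval] at hfin
    have hzero' : ts * -((F Lstar - F (Lstar + ts • Δhat)) / ts)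
        + (F Lstar - F (Lstar + ts • Δhat)) = 0 := by
      field_simp
      ring
    have hpos : 0 < c * r ^ 2 := by positivity
    linarith only [hfin, hzero', hpos]
end
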